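/- arXiv:2309.00162 — 4 statements merged into one kernel-verified Lean document; each statement's English description precedes it below -/
import Mathlib

section
/- If w is an Eisenstein integer not divisible by β = ω - ω², then w³ ≡ 1 or w³ ≡ -1 (mod 9) in ℤ[ω]. -/
/-!
Since `β² = -3` and `𝒪` is generated by `ω ≡ 1 (mod β)`, every element of `𝒪` is congruent to
`0`, `1` or `-1` modulo `β`. So if `β ∤ w` then `±w = 1 + βt`, and `β² = -3` turns the cube into
`(1 + βt)³ - 1 = -3β(t³ - t) - 9t²`. As `β ∣ (t - 1)t(t + 1) = t³ - t`, this is divisible by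
`3β² = -9`.
-/

section CubeModNine

variable {R : Type*} [CommRing R] {β : R}

theorem dvd_or_dvd_sub_one_or_dvd_add_one_of_dvd_three (h3 : β ∣ 3) {x : R} {n : ℤ}
    (hn : β ∣ x - n) : β ∣ x ∨ β ∣ x - 1 ∨ β ∣ x + 1 := by
  have hnr : β ∣ ((n - n % 3 : ℤ) : R) :=
    h3.trans (by simpa using Int.cast_dvd_cast (α := R) 3 _ Int.dvd_self_sub_emod)
  have hxr : β ∣ x - ((n % 3 : ℤ) : R) := by
    simpa [sub_add_sub_cancel] using dvd_add hn hnr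
  have hr : n % 3 = 0 ∨ n % 3 = 1 ∨ n % 3 = 2 := by omega
  rcases hr with hr | hr | hr <;> rw [hr] at hxr
  · exact .inl (by simpa using hxr)
  · exact .inr (.inl (by simpa using hxr))
  · right; right
    simpa [show x - 2 + 3 = x + 1 by ring] using dvd_add hxr h3

theorem dvd_mul_sub_one_mul_add_one (htri : ∀ t : R, β ∣ t ∨ β ∣ t - 1 ∨ β ∣ t + 1) (t : R) :
    β ∣ t * (t - 1) * (t + 1) := by
  rcases htri t with h | h | h
  · exact (h.mul_right _).mul_right _
  · exact (h.mul_left _).mul_right _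
  · exact h.mul_left _

theorem nine_dvd_cube_sub_one_of_dvd_sub_one (hβ : β ^ 2 = -3)
    (htri : ∀ t : R, β ∣ t ∨ β ∣ t - 1 ∨ β ∣ t + 1) {x : R} (hx : β ∣ x - 1) :
    9 ∣ x ^ 3 - 1 := by
  obtain ⟨t, rfl⟩ : ∃ t, x = 1 + β * t := by
    obtain ⟨t, ht⟩ := hx
    exact ⟨t, by linear_combination ht⟩
  obtain ⟨s, hs⟩ := dvd_mul_sub_one_mul_add_one htri t
  exact ⟨s - t ^ 2, by linear_combination (3 * t ^ 2 + β * t ^ 3 - 3 * s) * hβ - 3 * β * hs⟩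

theorem nine_dvd_cube_sub_one_or_cube_add_one (hβ : β ^ 2 = -3)
    (htri : ∀ t : R, β ∣ t ∨ β ∣ t - 1 ∨ β ∣ t + 1) {x : R} (hx : ¬ β ∣ x) :
    9 ∣ x ^ 3 - 1 ∨ 9 ∣ x ^ 3 + 1 := by
  rcases htri x with h | h | h
  · exact absurd h hx
  · exact .inl (nine_dvd_cube_sub_one_of_dvd_sub_one hβ htri h)
  · have h' : β ∣ -x - 1 := by rw [← neg_add']; exact h.neg_right
    have hcube : x ^ 3 + 1 = -((-x) ^ 3 - 1) := by ring
    exact .inr (hcube ▸ (nine_dvd_cube_sub_one_of_dvd_sub_one hβ htri h').neg_right)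

end CubeModNine

theorem Subring.exists_sub_one_dvd_sub_intCast {R : Type*} [CommRing R] (z : R)
    (x : Subring.closure ({z} : Set R)) :
    ∃ n : ℤ, (⟨z, Subring.subset_closure rfl⟩ - 1 : Subring.closure ({z} : Set R)) ∣ x - n := by
  obtain ⟨x, hx⟩ := x
  induction hx using Subring.closure_induction with
  | mem x hx =>
    obtain rfl := Set.mem_singleton_iff.1 hx
    exact ⟨1, by simp⟩
  | zero => exact ⟨0, by change _ ∣ (0 : closure {z}) - _; simp⟩
  | one => exact ⟨1, by change _ ∣ (1 : closure {z}) - _; simp⟩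
  | add x y hx hy ihx ihy =>
    obtain ⟨n, hn⟩ := ihx
    obtain ⟨m, hm⟩ := ihy
    refine ⟨n + m, ?_⟩
    change _ ∣ (⟨x, hx⟩ + ⟨y, hy⟩ : closure {z}) - _
    rw [Int.cast_add, add_sub_add_comm]
    exact dvd_add hn hm
  | neg x hx ih =>
    obtain ⟨n, hn⟩ := ih
    refine ⟨-n, ?_⟩
    change _ ∣ -(⟨x, hx⟩ : closure {z}) - _
    rw [Int.cast_neg, neg_sub_neg, ← neg_sub (⟨x, hx⟩ : closure {z})]
    exact hn.neg_right
  | mul x y hx hy ihx ihy =>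
    obtain ⟨n, hn⟩ := ihx
    obtain ⟨m, hm⟩ := ihy
    refine ⟨n * m, ?_⟩
    change _ ∣ (⟨x, hx⟩ * ⟨y, hy⟩ : closure {z}) - _
    rw [show (⟨x, hx⟩ * ⟨y, hy⟩ : closure {z}) - ((n * m : ℤ) : closure {z}) =
        (⟨x, hx⟩ - n) * ⟨y, hy⟩ + n * (⟨y, hy⟩ - m) by push_cast; ring]
    exact dvd_add (hn.mul_right _) (hm.mul_left _)

theorem eisenstein_cube_mod_nine (ω : ℂ) (hω : ω ^ 3 = 1) (hω1 : ω ≠ 1)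
    (β w : Subring.closure ({ω} : Set ℂ)) (hβ : (β : ℂ) = ω - ω ^ 2)
    (hw : ¬ β ∣ w) :
    (9 : Subring.closure ({ω} : Set ℂ)) ∣ w ^ 3 - 1 ∨
    (9 : Subring.closure ({ω} : Set ℂ)) ∣ w ^ 3 + 1 := by
  set o : Subring.closure ({ω} : Set ℂ) := ⟨ω, Subring.subset_closure rfl⟩
  have hsum : ω ^ 2 + ω + 1 = 0 := by
    have : (ω - 1) * (ω ^ 2 + ω + 1) = 0 := by linear_combination hω
    exact (mul_eq_zero.1 this).resolve_left (sub_ne_zero.2 hω1)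
  have hβsq : β ^ 2 = -3 := Subtype.ext <| by
    push_cast [hβ, show ((3 : Subring.closure ({ω} : Set ℂ)) : ℂ) = 3 from rfl]
    linear_combination hsum + (ω - 2) * hω
  have hβo : β ∣ o - 1 := ⟨-o ^ 2, Subtype.ext <| by
    push_cast [hβ, o]; linear_combination (1 - ω) * hω⟩
  have h3 : β ∣ 3 := ⟨-β, by linear_combination hβsq⟩
  refine nine_dvd_cube_sub_one_or_cube_add_one hβsq (fun t => ?_) hw
  obtain ⟨n, hn⟩ := Subring.exists_sub_one_dvd_sub_intCast ω t
  exact dvd_or_dvd_sub_one_or_dvd_add_one_of_dvd_three h3 (hβo.trans hn)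
end

section
/- Let M be a nonzero element of ℤ[ω]. If there exist nonzero r, s, t in ℤ[ω] with ω·r³ + ω²·s³ + M·t³ = 0, then M = x³ + y³ for some x, y in the field ℚ(ω). -/
theorem sum_of_cubes_of_descent_eq (ω : ℂ) (hω : ω ^ 3 = 1) (hω1 : ω ≠ 1)
    (M r s t : Subring.closure ({ω} : Set ℂ))
    (hM : M ≠ 0) (hr : r ≠ 0) (hs : s ≠ 0) (ht : t ≠ 0)
    (e : Subring.closure ({ω} : Set ℂ)) (he : (e : ℂ) = ω)
    (h : e * r ^ 3 + e ^ 2 * s ^ 3 + M * t ^ 3 = 0) :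
    ∃ x y : ℂ, x ∈ Subfield.closure ({ω} : Set ℂ) ∧ y ∈ Subfield.closure ({ω} : Set ℂ) ∧
      x ^ 3 + y ^ 3 = (M : ℂ) := by
  have hsub : (Subring.closure ({ω} : Set ℂ)) ≤ (Subfield.closure ({ω} : Set ℂ)).toSubring :=
    Subring.closure_le.mpr Subfield.subset_closure
  have hωF : ω ∈ Subfield.closure ({ω} : Set ℂ) := Subfield.subset_closure rfl
  have hrF : (r : ℂ) ∈ Subfield.closure ({ω} : Set ℂ) := hsub r.2
  have hsF : (s : ℂ) ∈ Subfield.closure ({ω} : Set ℂ) := hsub s.2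
  have htF : (t : ℂ) ∈ Subfield.closure ({ω} : Set ℂ) := hsub t.2
  have hR : (r : ℂ) ≠ 0 := fun h0 => hr (Subtype.ext h0)
  have hS : (s : ℂ) ≠ 0 := fun h0 => hs (Subtype.ext h0)
  have hT : (t : ℂ) ≠ 0 := fun h0 => ht (Subtype.ext h0)
  have hw1 : ω - 1 ≠ 0 := sub_ne_zero.mpr hω1
  have hω2 : ω ^ 2 + ω + 1 = 0 := by
    have h3 : (ω - 1) * (ω ^ 2 + ω + 1) = 0 := by linear_combination hω
    rcases mul_eq_zero.mp h3 with h' | h'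
    · exact absurd h' hw1
    · exact h'
  have h' : ω * (r : ℂ) ^ 3 + ω ^ 2 * (s : ℂ) ^ 3 + (M : ℂ) * (t : ℂ) ^ 3 = 0 := by
    have := congrArg (fun z : Subring.closure ({ω} : Set ℂ) => (z : ℂ)) h
    push_cast at this
    rw [he] at this
    exact this
  have hD : ((ω - 1) * ((r : ℂ) * s * t)) ≠ 0 :=
    mul_ne_zero hw1 (mul_ne_zero (mul_ne_zero hR hS) hT)
  refine ⟨(ω * (r : ℂ) ^ 3 - (s : ℂ) ^ 3) / ((ω - 1) * ((r : ℂ) * s * t)),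
    ((s : ℂ) ^ 3 - (r : ℂ) ^ 3) / ((ω - 1) * ((r : ℂ) * s * t)), ?_, ?_, ?_⟩
  · exact Subfield.div_mem _
      (Subfield.sub_mem _ (Subfield.mul_mem _ hωF (Subfield.pow_mem _ hrF 3))
        (Subfield.pow_mem _ hsF 3))
      (Subfield.mul_mem _ (Subfield.sub_mem _ hωF (Subfield.one_mem _))
        (Subfield.mul_mem _ (Subfield.mul_mem _ hrF hsF) htF))
  · exact Subfield.div_mem _
      (Subfield.sub_mem _ (Subfield.pow_mem _ hsF 3) (Subfield.pow_mem _ hrF 3))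
      (Subfield.mul_mem _ (Subfield.sub_mem _ hωF (Subfield.one_mem _))
        (Subfield.mul_mem _ (Subfield.mul_mem _ hrF hsF) htF))
  · rw [div_pow, div_pow, ← add_div, div_eq_iff (pow_ne_zero 3 hD)]
    linear_combination (-(ω - 1) ^ 3 * (r : ℂ) ^ 3 * (s : ℂ) ^ 3) * h' +
      (-3 * (r : ℂ) ^ 3 * (s : ℂ) ^ 6 + 3 * (r : ℂ) ^ 6 * (s : ℂ) ^ 3 - (r : ℂ) ^ 9
        + ω * (6 * (r : ℂ) ^ 3 * (s : ℂ) ^ 6 - 4 * (r : ℂ) ^ 6 * (s : ℂ) ^ 3 + (r : ℂ) ^ 9)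
        + ω ^ 2 * (-4 * (r : ℂ) ^ 3 * (s : ℂ) ^ 6 + (r : ℂ) ^ 6 * (s : ℂ) ^ 3)
        + ω ^ 3 * ((r : ℂ) ^ 3 * (s : ℂ) ^ 6)) * hω2
end

section
/- The equation x³ + y³ = 4 has no solution with x and y rational. -/
/-- Eisenstein integers `a + b ω` where `ω` is a primitive cube root of unity. -/
@[ext]
structure Zw where
  x : ℤ
  y : ℤ
  deriving DecidableEq

namespace Zw

instance : Zero Zw := ⟨⟨0, 0⟩⟩
instance : One Zw := ⟨⟨1, 0⟩⟩
instance : Add Zw := ⟨fun a b => ⟨a.x + b.x, a.y + b.y⟩⟩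
instance : Neg Zw := ⟨fun a => ⟨-a.x, -a.y⟩⟩
instance : Mul Zw := ⟨fun a b => ⟨a.x * b.x - a.y * b.y, a.x * b.y + a.y * b.x - a.y * b.y⟩⟩

@[simp] lemma zero_x : (0 : Zw).x = 0 := rfl
@[simp] lemma zero_y : (0 : Zw).y = 0 := rfl
@[simp] lemma one_x : (1 : Zw).x = 1 := rfl
@[simp] lemma one_y : (1 : Zw).y = 0 := rfl
@[simp] lemma add_x (a b : Zw) : (a + b).x = a.x + b.x := rfl
@[simp] lemma add_y (a b : Zw) : (a + b).y = a.y + b.y := rfl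
@[simp] lemma neg_x (a : Zw) : (-a).x = -a.x := rfl
@[simp] lemma neg_y (a : Zw) : (-a).y = -a.y := rfl
@[simp] lemma mul_x (a b : Zw) : (a * b).x = a.x * b.x - a.y * b.y := rfl
@[simp] lemma mul_y (a b : Zw) : (a * b).y = a.x * b.y + a.y * b.x - a.y * b.y := rfl
@[simp] lemma mk_x (a b : ℤ) : (Zw.mk a b).x = a := rfl
@[simp] lemma mk_y (a b : ℤ) : (Zw.mk a b).y = b := rfl

instance commRing : CommRing Zw where
  add_assoc a b c := by ext <;> simp <;> ring
  zero_add a := by ext <;> simp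
  add_zero a := by ext <;> simp
  add_comm a b := by ext <;> simp <;> ring
  neg_add_cancel a := by ext <;> simp
  mul_assoc a b c := by ext <;> simp <;> ring
  one_mul a := by ext <;> simp
  mul_one a := by ext <;> simp
  left_distrib a b c := by ext <;> simp <;> ring
  right_distrib a b c := by ext <;> simp <;> ring
  mul_comm a b := by ext <;> simp <;> ring
  zero_mul a := by ext <;> simp
  mul_zero a := by ext <;> simp
  nsmul := nsmulRec
  zsmul := zsmulRec

@[simp] lemma sub_x (a b : Zw) : (a - b).x = a.x - b.x := rfl
@[simp] lemma sub_y (a b : Zw) : (a - b).y = a.y - b.y := rfl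

@[simp] lemma intCast_x (n : ℤ) : (n : Zw).x = n := by
  induction n using Int.induction_on with
  | zero => simp
  | succ k ih => push_cast; simp_all
  | pred k ih => push_cast; simp_all

@[simp] lemma intCast_y (n : ℤ) : (n : Zw).y = 0 := by
  induction n using Int.induction_on with
  | zero => simp
  | succ k ih => push_cast; simp_all
  | pred k ih => push_cast; simp_all

/-- The norm. -/
def nrm (a : Zw) : ℤ := a.x ^ 2 - a.x * a.y + a.y ^ 2

/-- Conjugation. -/
def conj (a : Zw) : Zw := ⟨a.x - a.y, -a.y⟩

@[simp] lemma conj_x (a : Zw) : (conj a).x = a.x - a.y := rfl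
@[simp] lemma conj_y (a : Zw) : (conj a).y = -a.y := rfl

lemma nrm_mul (a b : Zw) : nrm (a * b) = nrm a * nrm b := by
  simp [nrm]; ring

lemma nrm_nonneg (a : Zw) : 0 ≤ nrm a := by
  have : 4 * nrm a = (2 * a.x - a.y) ^ 2 + 3 * a.y ^ 2 := by simp [nrm]; ring
  nlinarith [sq_nonneg (2 * a.x - a.y), sq_nonneg a.y]

lemma nrm_eq_zero {a : Zw} : nrm a = 0 ↔ a = 0 := by
  constructor
  · intro h
    have h4 : (2 * a.x - a.y) ^ 2 + 3 * a.y ^ 2 = 0 := by simp [nrm] at h; nlinarith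
    have hy : a.y = 0 := by nlinarith [sq_nonneg (2 * a.x - a.y), sq_nonneg a.y]
    have hx : a.x = 0 := by nlinarith [sq_nonneg (2 * a.x - a.y)]
    ext <;> simp [hx, hy]
  · rintro rfl; simp [nrm]

lemma mul_conj (a : Zw) : a * conj a = (nrm a : Zw) := by
  ext <;> simp only [mul_x, mul_y, conj_x, conj_y, intCast_x, intCast_y, nrm] <;> ring

instance : Nontrivial Zw := ⟨⟨0, 1, by intro h; simpa using congrArg Zw.x h⟩⟩

instance : NoZeroDivisors Zw := by
  constructor
  intro a b h
  have : nrm a * nrm b = 0 := by rw [← nrm_mul, h]; simp [nrm]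
  rcases mul_eq_zero.1 this with h' | h'
  · exact Or.inl (nrm_eq_zero.1 h')
  · exact Or.inr (nrm_eq_zero.1 h')

instance : IsDomain Zw := NoZeroDivisors.to_isDomain _

end Zw

namespace Zw

lemma nrm_conj (a : Zw) : nrm (conj a) = nrm a := by simp [nrm, conj]; ring

/-- Division with rounding. -/
def div (a b : Zw) : Zw :=
  ⟨round (((a * conj b).x : ℚ) / (nrm b : ℚ)), round (((a * conj b).y : ℚ) / (nrm b : ℚ))⟩

lemma nrm_rem_lt (a b : Zw) (hb : b ≠ 0) : nrm (a - b * div a b) < nrm b := by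
  have hn0 : 0 < nrm b := lt_of_le_of_ne (nrm_nonneg b) (fun h => hb (nrm_eq_zero.1 h.symm))
  set n : ℤ := nrm b with hn
  set c : Zw := a * conj b with hc
  set q : Zw := div a b with hq
  have key : conj b * (a - b * q) = c - (n : Zw) * q := by
    rw [mul_sub, ← mul_assoc, mul_comm (conj b) b, mul_conj b, mul_comm (conj b) a]
  have h1 : n * nrm (a - b * q) = nrm (c - (n : Zw) * q) := by
    rw [← key, nrm_mul, nrm_conj]
  have hx : (c - (n : Zw) * q).x = c.x - n * q.x := by simp
  have hy : (c - (n : Zw) * q).y = c.y - n * q.y := by simp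
  have hqx : q.x = round ((c.x : ℚ) / (n : ℚ)) := rfl
  have hqy : q.y = round ((c.y : ℚ) / (n : ℚ)) := rfl
  have hnQ : (0 : ℚ) < (n : ℚ) := by exact_mod_cast hn0
  have bX : |(c.x : ℚ) - (n : ℚ) * (q.x : ℚ)| ≤ (n : ℚ) / 2 := by
    have h2 : (c.x : ℚ) - (n : ℚ) * (q.x : ℚ) = (n : ℚ) * ((c.x : ℚ) / (n : ℚ) - (q.x : ℚ)) := by
      field_simp
    rw [h2, abs_mul, abs_of_pos hnQ, hqx]
    have := abs_sub_round ((c.x : ℚ) / (n : ℚ))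
    calc (n:ℚ) * |(c.x : ℚ) / (n : ℚ) - (round ((c.x : ℚ) / (n : ℚ)) : ℚ)| ≤ (n:ℚ) * (1/2) := by
          exact mul_le_mul_of_nonneg_left (by exact_mod_cast this) (le_of_lt hnQ)
      _ = (n:ℚ)/2 := by ring
  have bY : |(c.y : ℚ) - (n : ℚ) * (q.y : ℚ)| ≤ (n : ℚ) / 2 := by
    have h2 : (c.y : ℚ) - (n : ℚ) * (q.y : ℚ) = (n : ℚ) * ((c.y : ℚ) / (n : ℚ) - (q.y : ℚ)) := by
      field_simp
    rw [h2, abs_mul, abs_of_pos hnQ, hqy]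
    have := abs_sub_round ((c.y : ℚ) / (n : ℚ))
    calc (n:ℚ) * |(c.y : ℚ) / (n : ℚ) - (round ((c.y : ℚ) / (n : ℚ)) : ℚ)| ≤ (n:ℚ) * (1/2) := by
          exact mul_le_mul_of_nonneg_left (by exact_mod_cast this) (le_of_lt hnQ)
      _ = (n:ℚ)/2 := by ring
  set X : ℚ := (c.x : ℚ) - (n : ℚ) * (q.x : ℚ) with hX
  set Y : ℚ := (c.y : ℚ) - (n : ℚ) * (q.y : ℚ) with hY
  obtain ⟨bX1, bX2⟩ := abs_le.1 bX
  obtain ⟨bY1, bY2⟩ := abs_le.1 bY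
  have hval : (nrm (c - (n : Zw) * q) : ℚ) = X ^ 2 - X * Y + Y ^ 2 := by
    rw [nrm, hx, hy]; push_cast; ring
  have hbound : X ^ 2 - X * Y + Y ^ 2 ≤ 3 / 4 * (n : ℚ) ^ 2 := by
    nlinarith [mul_nonneg (by linarith : (0:ℚ) ≤ (n:ℚ)/2 - X) (by linarith : (0:ℚ) ≤ (n:ℚ)/2 + X),
      mul_nonneg (by linarith : (0:ℚ) ≤ (n:ℚ)/2 - Y) (by linarith : (0:ℚ) ≤ (n:ℚ)/2 + Y),
      sq_nonneg (X + Y)]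
  have hfin : ((n : ℚ)) * (nrm (a - b * q) : ℚ) ≤ 3 / 4 * (n : ℚ) ^ 2 := by
    rw [show ((n : ℚ)) * (nrm (a - b * q) : ℚ) = ((n * nrm (a - b * q) : ℤ) : ℚ) by push_cast; ring,
      h1, hval]
    exact hbound
  have : (nrm (a - b * q) : ℚ) < (n : ℚ) := by nlinarith
  exact_mod_cast this

instance : EuclideanDomain Zw where
  quotient := div
  quotient_zero a := by
    ext <;> simp [div, conj, nrm]
  remainder a b := a - b * div a b
  quotient_mul_add_remainder_eq a b := by ring
  r a b := a.nrm.natAbs < b.nrm.natAbs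
  r_wellFounded := InvImage.wf _ Nat.lt_wfRel.wf
  remainder_lt a b hb :=
    Int.natAbs_lt_natAbs_of_nonneg_of_lt (nrm_nonneg _) (nrm_rem_lt a b hb)
  mul_left_not_lt a b hb := by
    have h1 : (a * b).nrm.natAbs = a.nrm.natAbs * b.nrm.natAbs := by
      rw [nrm_mul, Int.natAbs_mul]
    have h2 : 1 ≤ b.nrm.natAbs := by
      rcases Nat.eq_zero_or_pos b.nrm.natAbs with h | h
      · exact absurd (nrm_eq_zero.1 (Int.natAbs_eq_zero.1 h)) hb
      · exact h
    simp only [h1, not_lt]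
    exact Nat.le_mul_of_pos_right _ h2

noncomputable instance : GCDMonoid Zw := EuclideanDomain.gcdMonoid Zw

end Zw

lemma intEven_iff (n : ℤ) : Even n ↔ (n : ZMod 2) = 0 := by
  rw [even_iff_two_dvd, show ((2:ℤ)) = ((2:ℕ):ℤ) by norm_num, ZMod.intCast_zmod_eq_zero_iff_dvd]

lemma intOdd_iff (n : ℤ) : Odd n ↔ (n : ZMod 2) = 1 := by
  rw [← Int.not_even_iff_odd, even_iff_two_dvd, show ((2:ℤ)) = ((2:ℕ):ℤ) by norm_num,
    ← ZMod.intCast_zmod_eq_zero_iff_dvd]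
  generalize (n : ZMod 2) = a; revert a; decide

namespace Zw

@[simp] lemma nrm_intCast (n : ℤ) : nrm (n : Zw) = n ^ 2 := by simp [nrm]

lemma isUnit_iff_nrm {a : Zw} : IsUnit a ↔ nrm a = 1 := by
  constructor
  · rintro ⟨u, rfl⟩
    have h : nrm (u : Zw) * nrm ((u⁻¹ : Zwˣ) : Zw) = 1 := by
      rw [← nrm_mul]
      simp [nrm]
    exact Int.eq_one_of_mul_eq_one_right (nrm_nonneg _) h
  · intro h
    refine IsUnit.of_mul_eq_one (a := a) (conj a) ?_
    rw [mul_conj, h]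
    simp

lemma nrm_dvd_of_dvd {a b : Zw} (h : a ∣ b) : nrm a ∣ nrm b := by
  obtain ⟨c, rfl⟩ := h
  exact ⟨nrm c, nrm_mul a c⟩

lemma nrm_eq_one_cases {u : Zw} (h : nrm u = 1) :
    (u.x = 1 ∧ u.y = 0) ∨ (u.x = -1 ∧ u.y = 0) ∨ (u.x = 0 ∧ u.y = 1) ∨
    (u.x = 0 ∧ u.y = -1) ∨ (u.x = 1 ∧ u.y = 1) ∨ (u.x = -1 ∧ u.y = -1) := by
  have h' : u.x ^ 2 - u.x * u.y + u.y ^ 2 = 1 := h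
  have hy2 : u.y ^ 2 ≤ 1 := by nlinarith [sq_nonneg (2 * u.x - u.y)]
  have hx2 : u.x ^ 2 ≤ 1 := by nlinarith [sq_nonneg (u.x - 2 * u.y)]
  have hyb : -1 ≤ u.y ∧ u.y ≤ 1 := ⟨by nlinarith, by nlinarith⟩
  have hxb : -1 ≤ u.x ∧ u.x ≤ 1 := ⟨by nlinarith, by nlinarith⟩
  have hx : u.x = -1 ∨ u.x = 0 ∨ u.x = 1 := by omega
  have hy : u.y = -1 ∨ u.y = 0 ∨ u.y = 1 := by omega
  rcases hx with hx | hx | hx <;> rcases hy with hy | hy | hy <;>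
    rw [hx, hy] at h' <;> norm_num at h' <;> tauto

end Zw

namespace Zw

theorem euler_param (X Y r : ℤ) (hcop : IsCoprime X Y) (hodd : Odd (X + Y))
    (heq : X ^ 2 + 3 * Y ^ 2 = r ^ 3) :
    ∃ E F : ℤ, X = E ^ 3 - 9 * E * F ^ 2 ∧ Y = 3 * E ^ 2 * F - 3 * F ^ 3 := by
  -- r is odd
  have hc2 : (X : ZMod 2) ^ 2 + 3 * (Y : ZMod 2) ^ 2 = (r : ZMod 2) ^ 3 := by
    have := congrArg (fun n : ℤ => (n : ZMod 2)) heq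
    push_cast at this
    exact this
  have hXY : (X : ZMod 2) + (Y : ZMod 2) = 1 := by
    have := (intOdd_iff _).1 hodd; push_cast at this; exact this
  have hr1 : (r : ZMod 2) = 1 := by
    revert hc2 hXY
    generalize (X : ZMod 2) = a; generalize (Y : ZMod 2) = b; generalize (r : ZMod 2) = c
    revert a b c; decide
  have hrodd : Odd r := (intOdd_iff r).2 hr1
  -- 3 does not divide r
  have h3r : ¬ (3:ℤ) ∣ r := by
    intro h3
    obtain ⟨r', rfl⟩ := h3
    have h1 : (3:ℤ) ∣ X ^ 2 := ⟨9 * r' ^ 3 - Y ^ 2, by linear_combination heq⟩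
    have h2 : (3:ℤ) ∣ X := Int.prime_three.dvd_of_dvd_pow h1
    obtain ⟨X', rfl⟩ := h2
    have heq' : 9 * X' ^ 2 + 3 * Y ^ 2 = 27 * r' ^ 3 := by linear_combination heq
    have h4 : (3:ℤ) ∣ Y ^ 2 := ⟨3 * r' ^ 3 - X' ^ 2, by linarith⟩
    have h5 : (3:ℤ) ∣ Y := Int.prime_three.dvd_of_dvd_pow h4
    have h6 : IsUnit (3:ℤ) := hcop.isUnit_of_dvd' ⟨X', rfl⟩ h5
    rw [Int.isUnit_iff] at h6; omega
  set α : Zw := ⟨X + Y, 2*Y⟩ with hαdef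
  have hnrmα : nrm α = r ^ 3 := by
    have : nrm α = X ^ 2 + 3 * Y ^ 2 := by simp [nrm, hαdef]; ring
    rw [this, heq]
  have hprod : α * conj α = (r : Zw) ^ 3 := by
    rw [mul_conj, hnrmα]; push_cast; ring
  -- coprimality of α and its conjugate
  have hαcop : IsCoprime α (conj α) := by
    rw [← gcd_isUnit_iff]
    set d : Zw := gcd α (conj α) with hd
    have hdα : d ∣ α := gcd_dvd_left _ _
    have hdβ : d ∣ conj α := gcd_dvd_right _ _
    have hsum : d ∣ ((2*X : ℤ) : Zw) := by
      have : α + conj α = ((2*X : ℤ) : Zw) := by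
        rw [hαdef]; ext <;> simp only [add_x, add_y, conj_x, conj_y, intCast_x, intCast_y,
          mk_x, mk_y] <;> ring
      rw [← this]; exact dvd_add hdα hdβ
    have hdiff : d ∣ ((2*Y : ℤ) : Zw) * ⟨1, 2⟩ := by
      have : α - conj α = ((2*Y : ℤ) : Zw) * ⟨1, 2⟩ := by
        rw [hαdef]; ext <;> simp only [sub_x, sub_y, conj_x, conj_y, intCast_x, intCast_y,
          mul_x, mul_y, mk_x, mk_y] <;> ring
      rw [← this]; exact dvd_sub hdα hdβ
    have hn1 : nrm d ∣ 4 * X ^ 2 := by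
      have := nrm_dvd_of_dvd hsum; rw [nrm_intCast] at this
      convert this using 1; ring
    have hn2 : nrm d ∣ 4 * (3 * Y ^ 2) := by
      have := nrm_dvd_of_dvd hdiff
      rw [nrm_mul, nrm_intCast] at this
      convert this using 1; simp [nrm]; ring
    have hnr : nrm d ∣ r ^ 3 := by
      have := nrm_dvd_of_dvd hdα; rwa [hnrmα] at this
    have hndodd : Odd (nrm d) := by
      rw [← Int.not_even_iff_odd]
      intro he
      have h2 : (2:ℤ) ∣ r ^ 3 := dvd_trans (even_iff_two_dvd.1 he) hnr
      have : Even (r ^ 3) := even_iff_two_dvd.2 h2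
      exact (Int.not_even_iff_odd.2 hrodd.pow) this
    have hcop2 : IsCoprime (nrm d) (2:ℤ) := by
      obtain ⟨m, hm⟩ := hndodd; exact ⟨1, -m, by linarith⟩
    have hcop4 : IsCoprime (nrm d) (4:ℤ) := by
      rw [show (4:ℤ) = 2 * 2 by norm_num]; exact hcop2.mul_right hcop2
    have hX2 : nrm d ∣ X ^ 2 := hcop4.dvd_of_dvd_mul_left hn1
    have h3Y2 : nrm d ∣ 3 * Y ^ 2 := hcop4.dvd_of_dvd_mul_left hn2
    have hcop3 : IsCoprime (nrm d) (3:ℤ) := by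
      rw [isCoprime_comm, Int.prime_three.coprime_iff_not_dvd]
      intro h3
      have : (3:ℤ) ∣ r ^ 3 := dvd_trans h3 hnr
      exact h3r (Int.prime_three.dvd_of_dvd_pow this)
    have hY2 : nrm d ∣ Y ^ 2 := hcop3.dvd_of_dvd_mul_left h3Y2
    have hu : IsUnit (nrm d) := (hcop.pow).isUnit_of_dvd' hX2 hY2
    rw [Int.isUnit_iff] at hu
    rcases hu with hu | hu
    · exact isUnit_iff_nrm.2 hu
    · exfalso; have := nrm_nonneg d; omega
  obtain ⟨γ, hγ⟩ := exists_associated_pow_of_mul_eq_pow' hαcop hprod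
  obtain ⟨u, hu⟩ := hγ
  -- the unit is ±1
  have hnu : nrm (u : Zw) = 1 := isUnit_iff_nrm.1 u.isUnit
  have hnγodd : Odd (nrm γ) := by
    have h1 : nrm (γ ^ 3) * nrm (u : Zw) = r ^ 3 := by rw [← nrm_mul, hu, hnrmα]
    have h2 : nrm γ ^ 3 = r ^ 3 := by
      rw [hnu, mul_one] at h1
      rw [← h1, show (γ:Zw) ^ 3 = γ * γ * γ by ring, nrm_mul, nrm_mul]; ring
    rw [← Int.not_even_iff_odd]
    intro he
    have h3 : Even (nrm γ ^ 3) := by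
      rw [show nrm γ ^ 3 = nrm γ * nrm γ ^ 2 by ring]; exact he.mul_right _
    rw [h2] at h3
    exact (Int.not_even_iff_odd.2 hrodd.pow) h3
  have hx3 : ∀ g : Zw, (g*g*g).x = g.x^3 - 3*g.x*g.y^2 + g.y^3 := by
    intro g; simp; ring
  have hy3 : ∀ g : Zw, (g*g*g).y = 3*g.x^2*g.y - 3*g.x*g.y^2 := by
    intro g; simp; ring
  have hαx : α.x = X + Y := rfl
  have hαy : α.y = 2 * Y := rfl
  have hαxodd : Odd α.x := by rw [hαx]; exact hodd
  have hαyeven : Even α.y := by rw [hαy]; exact ⟨Y, by ring⟩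
  rw [show (γ:Zw) ^ 3 = γ * γ * γ by ring] at hu
  set s1 : ℤ := (γ*γ*γ).x with hs1def
  set s2 : ℤ := (γ*γ*γ).y with hs2def
  have hs2 : Even s2 := by
    rw [hs2def, intEven_iff, hy3]
    push_cast
    generalize (γ.x : ZMod 2) = a; generalize (γ.y : ZMod 2) = b
    revert a b; decide
  have hs1 : Odd s1 := by
    have hab : (γ.x : ZMod 2)^2 - (γ.x : ZMod 2)*(γ.y : ZMod 2) + (γ.y : ZMod 2)^2 = 1 := by
      have := (intOdd_iff _).1 hnγodd
      rw [nrm] at this; push_cast at this; exact this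
    rw [hs1def, intOdd_iff, hx3]
    push_cast
    revert hab
    generalize (γ.x : ZMod 2) = a; generalize (γ.y : ZMod 2) = b
    revert a b; decide
  have hEx : s1 * (↑u : Zw).x - s2 * (↑u : Zw).y = X + Y := by
    rw [hs1def, hs2def, ← mul_x (γ*γ*γ) ↑u, hu, hαx]
  have hEy : s1 * (↑u : Zw).y + s2 * (↑u : Zw).x - s2 * (↑u : Zw).y = 2 * Y := by
    rw [hs1def, hs2def, ← mul_y (γ*γ*γ) ↑u, hu, hαy]
  obtain ⟨δ, hδ, hδodd⟩ : ∃ δ : Zw, δ * δ * δ = α ∧ Odd (nrm δ) := by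
    rcases nrm_eq_one_cases hnu with ⟨hux,huy⟩|⟨hux,huy⟩|⟨hux,huy⟩|⟨hux,huy⟩|⟨hux,huy⟩|⟨hux,huy⟩
    · have h1 : ((u : Zw)) = 1 := by ext <;> simp [hux, huy]
      rw [h1, mul_one] at hu
      exact ⟨γ, hu, hnγodd⟩
    · have h1 : ((u : Zw)) = -1 := by ext <;> simp [hux, huy]
      rw [h1] at hu
      refine ⟨-γ, by rw [← hu]; ring, ?_⟩
      have : nrm (-γ) = nrm γ := by simp [nrm]
      rwa [this]
    · exfalso
      rw [hux, huy] at hEx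
      have h2 : -s2 = X + Y := by linarith
      have h3 : Even (X + Y) := by rw [← h2]; exact hs2.neg
      exact (Int.not_even_iff_odd.2 hodd) h3
    · exfalso
      rw [hux, huy] at hEx
      have h2 : s2 = X + Y := by linarith
      have h3 : Even (X + Y) := by rw [← h2]; exact hs2
      exact (Int.not_even_iff_odd.2 hodd) h3
    · exfalso
      rw [hux, huy] at hEy
      have h2 : s1 = 2 * Y := by linarith
      have h3 : Odd (2 * Y) := by rw [← h2]; exact hs1
      rw [← Int.not_even_iff_odd] at h3
      exact h3 ⟨Y, by ring⟩
    · exfalso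
      rw [hux, huy] at hEy
      have h2 : -s1 = 2 * Y := by linarith
      have h3 : Odd (2 * Y) := by rw [← h2]; exact hs1.neg
      rw [← Int.not_even_iff_odd] at h3
      exact h3 ⟨Y, by ring⟩
  have hδboth : ¬ (Even δ.x ∧ Even δ.y) := by
    rintro ⟨⟨k, hk⟩, ⟨l, hl⟩⟩
    have : Even (nrm δ) := by
      rw [nrm, hk, hl]
      exact ⟨(k+k)*k - (k+k)*l + (l+l)*l, by ring⟩
    exact (Int.not_even_iff_odd.2 hδodd) this
  have hw3 : ((⟨0,1⟩ : Zw)) * ⟨0,1⟩ * ⟨0,1⟩ = 1 := by ext <;> simp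
  obtain ⟨η, hη, hηy⟩ : ∃ η : Zw, η * η * η = α ∧ Even η.y := by
    rcases Int.even_or_odd δ.y with hby | hby
    · exact ⟨δ, hδ, hby⟩
    · rcases Int.even_or_odd δ.x with hbx | hbx
      · refine ⟨δ * ⟨0,1⟩ * ⟨0,1⟩, ?_, ?_⟩
        · rw [show (δ * ⟨0,1⟩ * ⟨0,1⟩) * (δ * ⟨0,1⟩ * ⟨0,1⟩) * (δ * ⟨0,1⟩ * ⟨0,1⟩)
              = (δ * δ * δ) * (((⟨0,1⟩:Zw)) * ⟨0,1⟩ * ⟨0,1⟩) * (((⟨0,1⟩:Zw)) * ⟨0,1⟩ * ⟨0,1⟩) by ring,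
            hw3, mul_one, mul_one, hδ]
        · have : (δ * ⟨0,1⟩ * ⟨0,1⟩).y = -δ.x := by
            simp only [mul_x, mul_y, mk_x, mk_y]; ring
          rw [this]
          exact hbx.neg
      · refine ⟨δ * ⟨0,1⟩, ?_, ?_⟩
        · rw [show (δ * ⟨0,1⟩) * (δ * ⟨0,1⟩) * (δ * ⟨0,1⟩)
              = (δ * δ * δ) * (((⟨0,1⟩:Zw)) * ⟨0,1⟩ * ⟨0,1⟩) by ring, hw3, mul_one, hδ]
        · have : (δ * ⟨0,1⟩).y = δ.x - δ.y := by
            simp only [mul_x, mul_y, mk_x, mk_y]; ring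
          rw [this]
          exact hbx.sub_odd hby
  obtain ⟨F, hF⟩ := hηy
  have hex := congrArg Zw.x hη
  have hey := congrArg Zw.y hη
  rw [hx3, hαx, hF] at hex
  rw [hy3, hαy, hF] at hey
  set e : ℤ := η.x with he
  have h2Y : 2 * Y = 6 * (e^2*F) - 12 * (e*F^2) := by linear_combination -hey
  have hY' : Y = 3 * (e^2*F) - 6 * (e*F^2) := by linarith
  refine ⟨e - F, F, ?_, ?_⟩
  · linear_combination -hex - hY'
  · linear_combination hY'

end Zw

section Descent

lemma odd_cop2 {a : ℤ} (h : Odd a) : IsCoprime a (2:ℤ) := by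
  obtain ⟨m, hm⟩ := h; exact ⟨1, -m, by linarith⟩

lemma int_cube_split {m n c : ℤ} (h : IsCoprime m n) (heq : m * n = c ^ 3) :
    (∃ a, m = a ^ 3) ∧ ∃ b, n = b ^ 3 := by
  constructor
  · obtain ⟨d, u, hu⟩ := exists_associated_pow_of_mul_eq_pow' h heq
    rcases Int.isUnit_iff.1 u.isUnit with h1 | h1
    · exact ⟨d, by rw [← hu, h1, mul_one]⟩
    · exact ⟨-d, by rw [← hu, h1]; ring⟩
  · obtain ⟨d, u, hu⟩ := exists_associated_pow_of_mul_eq_pow' h.symm (by rwa [mul_comm] at heq)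
    rcases Int.isUnit_iff.1 u.isUnit with h1 | h1
    · exact ⟨d, by rw [← hu, h1, mul_one]⟩
    · exact ⟨-d, by rw [← hu, h1]; ring⟩

lemma intc (k : ℤ) (h : Odd k) : IsCoprime (4:ℤ) k := by
  have h2 := (odd_cop2 h).symm
  rw [show (4:ℤ) = 2*2 by norm_num]
  exact h2.mul_left h2

theorem no_descent (n : ℕ) : ∀ c : ℤ, c.natAbs ≤ n → ∀ a b : ℤ, a^3 + b^3 = 4*c^3 → c = 0 := by
  induction n with
  | zero =>
    intro c hc a b _
    omega
  | succ n ih =>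
    intro c hc a b heq
    by_contra hc0
    -- reduction to the coprime case
    rcases Nat.eq_zero_or_pos (Int.gcd a b) with hg | hgpos
    · rw [Int.gcd_eq_zero_iff] at hg
      obtain ⟨rfl, rfl⟩ := hg
      have : c^3 = 0 := by linarith
      exact hc0 (pow_eq_zero_iff (by norm_num) |>.1 this)
    by_cases hg1 : Int.gcd a b = 1
    swap
    · -- a common prime divisor: divide through
      obtain ⟨p, hp, hpg⟩ := Nat.exists_prime_and_dvd hg1
      have hpa : (p:ℤ) ∣ a := dvd_trans (Int.natCast_dvd_natCast.2 hpg) (Int.gcd_dvd_left a b)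
      have hpb : (p:ℤ) ∣ b := dvd_trans (Int.natCast_dvd_natCast.2 hpg) (Int.gcd_dvd_right a b)
      obtain ⟨a', rfl⟩ := hpa
      obtain ⟨b', rfl⟩ := hpb
      by_cases hp2 : p = 2
      · subst hp2
        push_cast at heq
        have h1' : 8*a'^3 + 8*b'^3 = 4*c^3 := by linear_combination heq
        have h2 : (2:ℤ) ∣ c := by
          have : (2:ℤ) ∣ c^3 := ⟨a'^3+b'^3, by linarith⟩
          exact Int.prime_two.dvd_of_dvd_pow this
        obtain ⟨c', rfl⟩ := h2
        have h3' : 8*c'^3 = (2*c')^3 := by ring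
        have h3 : a'^3 + b'^3 = 4*c'^3 := by linarith [h3' ▸ h1']
        have hc'0 : c' ≠ 0 := by rintro rfl; simp at hc0
        have hlt : c'.natAbs ≤ n := by
          have : (2*c').natAbs = 2 * c'.natAbs := by
            simp [Int.natAbs_mul]
          omega
        exact hc'0 (ih c' hlt a' b' h3)
      · -- odd prime
        have hpprime : Prime (p:ℤ) := (Nat.prime_iff_prime_int.mp hp)
        have hpodd : Odd (p:ℤ) := by
          rcases hp.eq_two_or_odd' with h | h
          · exact absurd h hp2
          · exact_mod_cast h
        have h1' : (p:ℤ)^3 * (a'^3 + b'^3) = 4*c^3 := by linear_combination heq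
        have hdvd : (p:ℤ)^3 ∣ 4*c^3 := ⟨a'^3+b'^3, h1'.symm⟩
        have hcop : IsCoprime ((p:ℤ)^3) (4:ℤ) := ((intc _ hpodd).symm.pow_left)
        have hdc3 : (p:ℤ)^3 ∣ c^3 := hcop.dvd_of_dvd_mul_left hdvd
        have hdc : (p:ℤ) ∣ c := by
          have h30 : (3:ℕ) ≠ 0 := by norm_num
          exact (Int.pow_dvd_pow_iff h30).1 hdc3
        obtain ⟨c'', rfl⟩ := hdc
        have hp0 : (p:ℤ) ≠ 0 := by exact_mod_cast hp.ne_zero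
        have h4 : a'^3 + b'^3 = 4*c''^3 := by
          have h5 : (p:ℤ)^3 * (a'^3 + b'^3) = (p:ℤ)^3 * (4*c''^3) := by linear_combination h1'
          exact mul_left_cancel₀ (pow_ne_zero 3 hp0) h5
        have hc''0 : c'' ≠ 0 := by rintro rfl; simp at hc0
        have hlt : c''.natAbs ≤ n := by
          have h6 : ((p:ℤ)*c'').natAbs = p * c''.natAbs := by
            rw [Int.natAbs_mul, Int.natAbs_natCast]
          have h7 : 2 ≤ p := hp.two_le
          have h8 : 1 ≤ c''.natAbs := by
            rcases Nat.eq_zero_or_pos c''.natAbs with h | h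
            · exact absurd (Int.natAbs_eq_zero.1 h) hc''0
            · exact h
          nlinarith [hc]
        exact hc''0 (ih c'' hlt a' b' h4)
    -- coprime case
    have hab : IsCoprime a b := Int.isCoprime_iff_gcd_eq_one.2 hg1
    -- both a and b are odd
    have haodd : Odd a ∧ Odd b := by
      have hcast : (a : ZMod 2)^3 + (b : ZMod 2)^3 = 0 := by
        have := congrArg (fun z : ℤ => (z : ZMod 2)) heq
        push_cast at this
        rw [this, show (4 : ZMod 2) = 0 by decide, zero_mul]
      rcases Int.even_or_odd a with hA | hA <;> rcases Int.even_or_odd b with hB | hB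
      · exfalso
        have h2a : (2:ℤ) ∣ a := even_iff_two_dvd.1 hA
        have h2b : (2:ℤ) ∣ b := even_iff_two_dvd.1 hB
        have := hab.isUnit_of_dvd' h2a h2b
        rw [Int.isUnit_iff] at this; omega
      · exfalso
        rw [(intEven_iff a).1 hA, (intOdd_iff b).1 hB] at hcast
        exact absurd hcast (by decide)
      · exfalso
        rw [(intOdd_iff a).1 hA, (intEven_iff b).1 hB] at hcast
        exact absurd hcast (by decide)
      · exact ⟨hA, hB⟩
    obtain ⟨hA, hB⟩ := haodd
    obtain ⟨p, hpdef⟩ : ∃ p, a + b = 2*p := by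
      obtain ⟨p, hp'⟩ := hA.add_odd hB
      exact ⟨p, by linarith⟩
    obtain ⟨q, hqdef⟩ : ∃ q, a - b = 2*q := by
      obtain ⟨q, hq'⟩ := hA.sub_odd hB
      exact ⟨q, by linarith⟩
    have ha' : a = p + q := by omega
    have hb' : b = p - q := by omega
    have hpq : p * (p^2 + 3*q^2) = 2*c^3 := by
      have key : 2 * (p * (p^2+3*q^2)) = 4*c^3 := by
        rw [← heq, ha', hb']; ring
      linarith
    have hcoppq : IsCoprime p q := by
      obtain ⟨u, v, huv⟩ := hab
      rw [ha', hb'] at huv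
      exact ⟨u + v, u - v, by linear_combination huv⟩
    have hpqodd : Odd (p + q) := by rw [← ha']; exact hA
    have hp0 : p ≠ 0 := by
      rintro rfl
      have : c^3 = 0 := by linarith
      exact hc0 (pow_eq_zero_iff (by norm_num) |>.1 this)
    have hqodd : Odd q := by
      rcases Int.even_or_odd q with hq | hq
      · exfalso
        have hpodd : Odd p := by
          rcases Int.even_or_odd p with hp' | hp'
          · exfalso
            have : Even (p + q) := hp'.add hq
            exact (Int.not_even_iff_odd.2 hpqodd) this
          · exact hp'
        have hcast : (p : ZMod 2) * ((p : ZMod 2)^2 + 3*(q : ZMod 2)^2) = 0 := by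
          have := congrArg (fun z : ℤ => (z : ZMod 2)) hpq
          push_cast at this
          rw [this, show (2 : ZMod 2) = 0 by decide, zero_mul]
        rw [(intOdd_iff p).1 hpodd, (intEven_iff q).1 hq] at hcast
        exact absurd hcast (by decide)
      · exact hq
    have hpeven : Even p := by
      rcases Int.even_or_odd p with hp' | hp'
      · exact hp'
      · exfalso
        have : Even (p + q) := by
          obtain ⟨k, hk⟩ := hp'
          obtain ⟨l, hl⟩ := hqodd
          exact ⟨k + l + 1, by omega⟩
        exact (Int.not_even_iff_odd.2 hpqodd) this
    have hq0 : q ≠ 0 := by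
      rintro rfl
      exact (by decide : ¬ Odd (0:ℤ)) hqodd
    have hq2 : 1 ≤ q^2 := by
      have h1 : q^2 ≠ 0 := pow_ne_zero _ hq0
      have h2 : 0 ≤ q^2 := sq_nonneg q
      omega
    by_cases h3p : (3:ℤ) ∣ p
    · -- CASE B : 3 ∣ p
      obtain ⟨h, hh⟩ := h3p
      have hh0 : h ≠ 0 := by rintro rfl; simp at hh; exact hp0 hh
      have hheven : Even h := by
        rw [hh] at hpeven
        rcases Int.even_mul.1 hpeven with h' | h'
        · exact absurd h' (by decide)
        · exact h'
      have hcophq : IsCoprime h q := by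
        obtain ⟨u, v, huv⟩ := hcoppq
        rw [hh] at huv
        exact ⟨3*u, v, by linear_combination huv⟩
      have h3q : ¬ (3:ℤ) ∣ q := by
        intro h3q
        have := hcoppq.isUnit_of_dvd' ⟨h, hh⟩ h3q
        rw [Int.isUnit_iff] at this; omega
      have hkey : 9*(h*(3*h^2+q^2)) = 2*c^3 := by
        linear_combination hpq - (p^2+3*p*h+9*h^2+3*q^2)*hh
      have hc3 : (3:ℤ) ∣ c := by
        have h32 : (3:ℤ) ∣ 2*c^3 := ⟨3*(h*(3*h^2+q^2)), by linarith⟩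
        rcases (Int.prime_three.dvd_mul.1 h32) with h' | h'
        · exact absurd h' (by decide)
        · exact Int.prime_three.dvd_of_dvd_pow h'
      obtain ⟨d, hd⟩ := hc3
      have hhd : h*(3*h^2+q^2) = 6*d^3 := by
        have h9 : 9*(h*(3*h^2+q^2)) = 9*(6*d^3) := by
          linear_combination hkey + (2*c^2+6*c*d+18*d^2)*hd
        linarith
      have hnodd : Odd (3*h^2+q^2) := by
        rw [intOdd_iff]
        push_cast
        rw [(intEven_iff h).1 hheven, (intOdd_iff q).1 hqodd]
        decide
      have h3n : ¬ (3:ℤ) ∣ (3*h^2+q^2) := by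
        intro h'
        have h1 : (3:ℤ) ∣ 3*h^2 := ⟨h^2, rfl⟩
        have h2 : (3:ℤ) ∣ q^2 := by
          have := dvd_sub h' h1
          rwa [show 3*h^2+q^2 - 3*h^2 = q^2 by ring] at this
        exact h3q (Int.prime_three.dvd_of_dvd_pow h2)
      have hcophn : IsCoprime h (3*h^2+q^2) := by
        have h1 := (hcophq.pow_right (n := 2)).add_mul_left_right (3*h)
        rwa [show q^2 + h*(3*h) = 3*h^2+q^2 by ring] at h1
      have hcop36 : IsCoprime (36:ℤ) (3*h^2+q^2) := by
        have c2 := (odd_cop2 hnodd).symm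
        have c3 := (Int.prime_three.coprime_iff_not_dvd).2 h3n
        rw [show (36:ℤ) = 2*(2*(3*3)) by norm_num]
        exact c2.mul_left (c2.mul_left (c3.mul_left c3))
      have hcopB : IsCoprime (36*h) (3*h^2+q^2) := hcop36.mul_left hcophn
      have heqB : (36*h)*(3*h^2+q^2) = (6*d)^3 := by linear_combination 36*hhd
      obtain ⟨⟨d1, hd1⟩, ⟨r, hr⟩⟩ := int_cube_split hcopB heqB
      have h2d1 : (2:ℤ) ∣ d1 := by
        refine Int.prime_two.dvd_of_dvd_pow (n := 3) ?_
        exact ⟨18*h, by linarith⟩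
      have h3d1 : (3:ℤ) ∣ d1 := by
        refine Int.prime_three.dvd_of_dvd_pow (n := 3) ?_
        exact ⟨12*h, by linarith⟩
      have h6d1 : (6:ℤ) ∣ d1 := by omega
      obtain ⟨t, ht⟩ := h6d1
      have hht : h = 6*t^3 := by
        have h36 : 36*h = 36*(6*t^3) := by
          linear_combination hd1 + (d1^2+6*t*d1+36*t^2)*ht
        linarith
      obtain ⟨E, F, hXE, hYE⟩ := Zw.euler_param q h r hcophq.symm
        (by
          have : Odd (q + h) := by
            obtain ⟨k, hk⟩ := hheven
            obtain ⟨l, hl⟩ := hqodd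
            exact ⟨k + l, by omega⟩
          exact this)
        (by linear_combination hr)
      have hcopEF : IsCoprime E F := by
        obtain ⟨u, v, huv⟩ := hcophq.symm
        rw [hXE, hYE] at huv
        exact ⟨u*E^2, -9*u*E*F + 3*v*E^2 - 3*v*F^2, by linear_combination huv⟩
      have hEoddFeven : (E : ZMod 2) = 1 ∧ (F : ZMod 2) = 0 := by
        have hq2' : ((E^3 - 9*E*F^2 : ℤ) : ZMod 2) = 1 := by
          rw [← hXE]; exact (intOdd_iff q).1 hqodd
        push_cast at hq2'
        revert hq2'
        generalize (E : ZMod 2) = e; generalize (F : ZMod 2) = f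
        revert e f; decide
      have hEodd : Odd E := (intOdd_iff E).2 hEoddFeven.1
      have hFeven : Even F := (intEven_iff F).2 hEoddFeven.2
      have hFt : F*((E-F)*(E+F)) = 2*t^3 := by
        have h3G : 3*(F*((E-F)*(E+F))) = 3*(2*t^3) := by
          linear_combination hht - hYE
        linarith
      have hoddEmF : Odd (E - F) := by
        obtain ⟨k, hk⟩ := hEodd
        obtain ⟨l, hl⟩ := hFeven
        exact ⟨k - l, by omega⟩
      have hoddEpF : Odd (E + F) := by
        obtain ⟨k, hk⟩ := hEodd
        obtain ⟨l, hl⟩ := hFeven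
        exact ⟨k + l, by omega⟩
      have cFEm : IsCoprime F (E-F) := by
        have h1 := (hcopEF.symm).add_mul_left_right (-1)
        rwa [show E + F*(-1) = E - F by ring] at h1
      have cFEp : IsCoprime F (E+F) := by
        have h1 := (hcopEF.symm).add_mul_left_right 1
        rwa [show E + F*1 = E + F by ring] at h1
      have cmp : IsCoprime (E-F) (E+F) := by
        have c2F : IsCoprime (E-F) (2*F) := (odd_cop2 hoddEmF).mul_right cFEm.symm
        have h1 := c2F.add_mul_left_right 1
        rwa [show 2*F + (E-F)*1 = E + F by ring] at h1
      have hcopA : IsCoprime (4*F) ((E-F)*(E+F)) :=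
        (intc _ (hoddEmF.mul hoddEpF)).mul_left (cFEm.mul_right cFEp)
      have heqB2 : (4*F)*((E-F)*(E+F)) = (2*t)^3 := by linear_combination 4*hFt
      obtain ⟨⟨d2, hd2⟩, ⟨prod2, hprod2⟩⟩ := int_cube_split hcopA heqB2
      have h2d2 : (2:ℤ) ∣ d2 := by
        refine Int.prime_two.dvd_of_dvd_pow (n := 3) ?_
        exact ⟨2*F, by linarith⟩
      obtain ⟨w, hw⟩ := h2d2
      have hFw : F = 2*w^3 := by
        have h4F : 4*F = 4*(2*w^3) := by
          linear_combination hd2 + (d2^2+2*w*d2+4*w^2)*hw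
        linarith
      obtain ⟨⟨u1, hu1⟩, ⟨v1, hv1⟩⟩ := int_cube_split cmp hprod2
      -- new solution (v1, -u1, w)
      have hneweq : v1^3 + (-u1)^3 = 4*w^3 := by
        linear_combination -hv1 + hu1 + 2*hFw
      have hF0 : F ≠ 0 := by
        rintro rfl
        have : h = 0 := by linear_combination hYE
        exact hh0 this
      have hw0 : w ≠ 0 := by
        rintro rfl
        simp at hFw
        exact hF0 hFw
      -- size estimate
      have hEF0 : E^2 - F^2 ≠ 0 := by
        intro h'
        have hoddprod : Odd ((E-F)*(E+F)) := hoddEmF.mul hoddEpF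
        have : (E-F)*(E+F) = 0 := by linear_combination h'
        rw [this] at hoddprod
        exact (by decide : ¬ Odd (0:ℤ)) hoddprod
      have hhw : h = 6*w^3*(E^2-F^2) := by
        linear_combination hYE + 3*(E^2-F^2)*hFw
      have habsh : |h| = 6*|w|^3*|E^2-F^2| := by
        rw [hhw, abs_mul, abs_mul, abs_pow]
        norm_num
      have habs1 : |h| * (3*h^2+q^2) = 6*|d|^3 := by
        have := congrArg abs hhd
        rwa [abs_mul, abs_of_nonneg (by positivity : (0:ℤ) ≤ 3*h^2+q^2), abs_mul, abs_pow,
          show |(6:ℤ)| = 6 by norm_num] at this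
      have hEF1 : 1 ≤ |E^2-F^2| := Int.one_le_abs hEF0
      have hw1 : 1 ≤ |w| := Int.one_le_abs hw0
      have hn1 : 1 ≤ 3*h^2+q^2 := by linarith only [hq2, sq_nonneg h]
      have hdw : |w| ≤ |d| := by
        by_contra hcon
        push_neg at hcon
        have h1 : |d|^3 < |w|^3 := pow_lt_pow_left₀ hcon (abs_nonneg d) (by norm_num : 3 ≠ 0)
        have h2 : 6*|w|^3 ≤ |h| := by
          have h5 := mul_le_mul_of_nonneg_left hEF1 (by positivity : (0:ℤ) ≤ 6*|w|^3)
          linarith only [habsh, h5]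
        have h6 := mul_le_mul_of_nonneg_left hn1 (abs_nonneg h)
        linarith only [habs1, h6, h2, h1]
      have hsize : w.natAbs < c.natAbs := by
        have hcd : c.natAbs = 3 * d.natAbs := by
          rw [hd, Int.natAbs_mul]
          norm_num
        have hwd : w.natAbs ≤ d.natAbs := by
          rw [Int.abs_eq_natAbs, Int.abs_eq_natAbs] at hdw
          exact_mod_cast hdw
        have hw1' : 1 ≤ w.natAbs := by
          rcases Nat.eq_zero_or_pos w.natAbs with h' | h'
          · exact absurd (Int.natAbs_eq_zero.1 h') hw0
          · exact h'
        omega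
      exact hw0 (ih w (by omega) v1 (-u1) hneweq)
    · -- CASE A : 3 ∤ p
      have hcp3 : IsCoprime p (3:ℤ) := ((Int.prime_three.coprime_iff_not_dvd).2 h3p).symm
      have hnodd : Odd (p^2+3*q^2) := by
        rw [intOdd_iff]
        push_cast
        rw [(intEven_iff p).1 hpeven, (intOdd_iff q).1 hqodd]
        decide
      have hcoppn : IsCoprime p (p^2+3*q^2) := by
        have h1 := ((hcp3.mul_right (hcoppq.pow_right (n := 2)))).add_mul_left_right p
        rwa [show 3*q^2 + p*p = p^2+3*q^2 by ring] at h1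
      have hcopA : IsCoprime (4*p) (p^2+3*q^2) := (intc _ hnodd).mul_left hcoppn
      have heqA : (4*p)*(p^2+3*q^2) = (2*c)^3 := by linear_combination 4*hpq
      obtain ⟨⟨s', hs'⟩, ⟨r, hr⟩⟩ := int_cube_split hcopA heqA
      have h2s' : (2:ℤ) ∣ s' := by
        refine Int.prime_two.dvd_of_dvd_pow (n := 3) ?_
        exact ⟨2*p, by linarith⟩
      obtain ⟨s, hs⟩ := h2s'
      have hps : p = 2*s^3 := by
        have h4p : 4*p = 4*(2*s^3) := by
          linear_combination hs' + (s'^2+2*s*s'+4*s^2)*hs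
        linarith
      obtain ⟨E, F, hXE, hYE⟩ := Zw.euler_param p q r hcoppq hpqodd (by linear_combination hr)
      have hcopEF : IsCoprime E F := by
        obtain ⟨u, v, huv⟩ := hcoppq
        rw [hXE, hYE] at huv
        exact ⟨u*E^2, -9*u*E*F + 3*v*E^2 - 3*v*F^2, by linear_combination huv⟩
      have hEF2 : (E : ZMod 2) = 0 ∧ (F : ZMod 2) = 1 := by
        have hq2' : ((3*E^2*F - 3*F^3 : ℤ) : ZMod 2) = 1 := by
          rw [← hYE]; exact (intOdd_iff q).1 hqodd
        push_cast at hq2'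
        revert hq2'
        generalize (E : ZMod 2) = e; generalize (F : ZMod 2) = f
        revert e f; decide
      have hEeven : Even E := (intEven_iff E).2 hEF2.1
      have hFodd : Odd F := (intOdd_iff F).2 hEF2.2
      have h3E : ¬ (3:ℤ) ∣ E := by
        intro h'
        obtain ⟨e, he⟩ := h'
        exact h3p ⟨9*e^3 - 9*e*F^2, by linear_combination hXE + (E^2+3*e*E+9*e^2 - 9*F^2)*he⟩
      have hcE3 : IsCoprime E (3:ℤ) := ((Int.prime_three.coprime_iff_not_dvd).2 h3E).symm
      have hcE3F : IsCoprime E (3*F) := hcE3.mul_right hcopEF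
      have hoddm : Odd (E - 3*F) := by
        obtain ⟨k, hk⟩ := hEeven
        obtain ⟨l, hl⟩ := hFodd
        exact ⟨k - 3*l - 2, by omega⟩
      have hoddp' : Odd (E + 3*F) := by
        obtain ⟨k, hk⟩ := hEeven
        obtain ⟨l, hl⟩ := hFodd
        exact ⟨k + 3*l + 1, by omega⟩
      have cEm : IsCoprime E (E-3*F) := by
        have h1 := (hcE3F.neg_right).add_mul_left_right 1
        rwa [show -(3*F) + E*1 = E - 3*F by ring] at h1
      have cEp : IsCoprime E (E+3*F) := by
        have h1 := hcE3F.add_mul_left_right 1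
        rwa [show 3*F + E*1 = E + 3*F by ring] at h1
      have h3mF : ¬ (3:ℤ) ∣ (E - 3*F) := by
        intro h'
        exact h3E (by
          have : (3:ℤ) ∣ (E - 3*F) + 3*F := dvd_add h' ⟨F, by ring⟩
          simpa using this)
      have cmp : IsCoprime (E-3*F) (E+3*F) := by
        have cF : IsCoprime (E-3*F) F := by
          have h1 := (hcopEF.symm).add_mul_left_right (-3)
          exact (by rwa [show E + F*(-3) = E - 3*F by ring] at h1 : IsCoprime F (E-3*F)).symm
        have c3' : IsCoprime (E-3*F) (3:ℤ) := ((Int.prime_three.coprime_iff_not_dvd).2 h3mF).symm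
        have c6F : IsCoprime (E-3*F) (2*(3*F)) :=
          (odd_cop2 hoddm).mul_right (c3'.mul_right cF)
        have h1 := c6F.add_mul_left_right 1
        rwa [show 2*(3*F) + (E-3*F)*1 = E + 3*F by ring] at h1
      have hcopA2 : IsCoprime (4*E) ((E-3*F)*(E+3*F)) :=
        (intc _ (hoddm.mul hoddp')).mul_left (cEm.mul_right cEp)
      have heqA2 : (4*E)*((E-3*F)*(E+3*F)) = (2*s)^3 := by
        linear_combination 4*hps - 4*hXE
      obtain ⟨⟨d1, hd1⟩, ⟨prod1, hprod1⟩⟩ := int_cube_split hcopA2 heqA2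
      have h2d1 : (2:ℤ) ∣ d1 := by
        refine Int.prime_two.dvd_of_dvd_pow (n := 3) ?_
        exact ⟨2*E, by linarith⟩
      obtain ⟨w, hw⟩ := h2d1
      have hEw : E = 2*w^3 := by
        have h4E : 4*E = 4*(2*w^3) := by
          linear_combination hd1 + (d1^2+2*w*d1+4*w^2)*hw
        linarith
      obtain ⟨⟨u1, hu1⟩, ⟨v1, hv1⟩⟩ := int_cube_split cmp hprod1
      have hneweq : u1^3 + v1^3 = 4*w^3 := by
        linear_combination -hu1 - hv1 + 2*hEw
      have hE0 : E ≠ 0 := by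
        rintro rfl
        have : p = 0 := by linear_combination hXE
        exact hp0 this
      have hw0 : w ≠ 0 := by
        rintro rfl
        simp at hEw
        exact hE0 hEw
      -- size estimate
      have hEF0 : E^2 - 9*F^2 ≠ 0 := by
        intro h'
        have hoddprod : Odd ((E-3*F)*(E+3*F)) := hoddm.mul hoddp'
        have : (E-3*F)*(E+3*F) = 0 := by linear_combination h'
        rw [this] at hoddprod
        exact (by decide : ¬ Odd (0:ℤ)) hoddprod
      have hpw : p = 2*w^3*(E^2-9*F^2) := by
        linear_combination hXE + (E^2-9*F^2)*hEw
      have habsp : |p| = 2*|w|^3*|E^2-9*F^2| := by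
        rw [hpw, abs_mul, abs_mul, abs_pow]
        norm_num
      have habs1 : |p| * (p^2+3*q^2) = 2*|c|^3 := by
        have := congrArg abs hpq
        rwa [abs_mul, abs_of_nonneg (by positivity : (0:ℤ) ≤ p^2+3*q^2), abs_mul, abs_pow,
          show |(2:ℤ)| = 2 by norm_num] at this
      have hEF1 : 1 ≤ |E^2-9*F^2| := Int.one_le_abs hEF0
      have hw1 : 1 ≤ |w| := Int.one_le_abs hw0
      have hn3 : 3 ≤ p^2+3*q^2 := by linarith only [hq2, sq_nonneg p]
      have hwc : |w| < |c| := by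
        by_contra hcon
        push_neg at hcon
        have h1 : |c|^3 ≤ |w|^3 := pow_le_pow_left₀ (abs_nonneg c) hcon 3
        have h2 : 2*|w|^3 ≤ |p| := by
          have h5 := mul_le_mul_of_nonneg_left hEF1 (by positivity : (0:ℤ) ≤ 2*|w|^3)
          linarith only [habsp, h5]
        have h3 : (1:ℤ) ≤ |w|^3 := by
          calc (1:ℤ) = 1^3 := by norm_num
            _ ≤ |w|^3 := pow_le_pow_left₀ (by norm_num) hw1 3
        have h6 := mul_le_mul_of_nonneg_left hn3 (abs_nonneg p)
        linarith only [habs1, h6, h2, h1, h3]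
      have hsize : w.natAbs < c.natAbs := by
        rw [Int.abs_eq_natAbs, Int.abs_eq_natAbs] at hwc
        exact_mod_cast hwc
      exact hw0 (ih w (by omega) u1 v1 hneweq)

end Descent

theorem legendre_four (x y : ℚ) : x ^ 3 + y ^ 3 ≠ 4 := by
  intro h
  set a : ℤ := x.num * (y.den : ℤ) with ha
  set b : ℤ := y.num * (x.den : ℤ) with hb
  set c : ℤ := (x.den : ℤ) * (y.den : ℤ) with hcdef
  have hxden : ((x.den : ℚ)) ≠ 0 := by exact_mod_cast x.den_nz
  have hyden : ((y.den : ℚ)) ≠ 0 := by exact_mod_cast y.den_nz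
  have hc0 : c ≠ 0 := by
    have : (0:ℤ) < c := by
      apply mul_pos <;> exact_mod_cast Nat.pos_of_ne_zero (by simpa using ‹_›)
    omega
  have heq : a ^ 3 + b ^ 3 = 4 * c ^ 3 := by
    have hx : (x.num : ℚ) = x * (x.den : ℚ) := by
      have h1 := Rat.num_div_den x
      rw [div_eq_iff hxden] at h1
      exact h1
    have hy : (y.num : ℚ) = y * (y.den : ℚ) := by
      have h1 := Rat.num_div_den y
      rw [div_eq_iff hyden] at h1
      exact h1
    have hcast : ((a ^ 3 + b ^ 3 : ℤ) : ℚ) = ((4 * c ^ 3 : ℤ) : ℚ) := by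
      push_cast [ha, hb, hcdef]
      rw [hx, hy]
      linear_combination ((x.den:ℚ))^3 * ((y.den:ℚ))^3 * h
    exact_mod_cast hcast
  exact hc0 (no_descent c.natAbs c le_rfl a b heq)
end

section
/- If A, B, C are Eisenstein integers with A + B + C = 0 and A·B·C a nonzero cube in ℤ[ω], then ord_β(A) = ord_β(B) = ord_β(C), where ord_β(D) is the exponent of β = ω - ω² in the factorization of D. -/
open NumberField

private lemma aux_not_dvd {R : Type*} [CommRing R] [IsDomain R] {θ lam : R}
    (hprime : Prime lam) (hlam : lam = θ - 1) (hθ3 : θ ^ 3 = 1) :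
    ∀ x : R, x = 1 ∨ x = -1 ∨ x = 3 ∨ x = -3 → ¬ lam ^ 4 ∣ x := by
  subst hlam
  have hθsq : θ ^ 2 + θ + 1 = 0 := by
    have h0 : (θ - 1) * (θ ^ 2 + θ + 1) = 0 := by linear_combination hθ3
    rcases mul_eq_zero.1 h0 with h | h
    · exact absurd h hprime.ne_zero
    · exact h
  have hlamsq : (θ - 1) ^ 2 = -3 * θ := by linear_combination hθsq
  rintro x (rfl | rfl | rfl | rfl) ⟨k, hk⟩
  · exact hprime.not_unit (isUnit_of_dvd_one ⟨(θ - 1) ^ 3 * k, by linear_combination hk⟩)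
  · exact hprime.not_unit (isUnit_of_dvd_one ⟨-((θ - 1) ^ 3 * k), by linear_combination -hk⟩)
  · have h1 : (θ - 1) ^ 2 * (1 + (θ - 1) ^ 2 * k * θ) = 0 := by
      linear_combination hlamsq - θ * hk
    rcases mul_eq_zero.1 h1 with h | h
    · exact hprime.ne_zero (pow_eq_zero_iff (n := 2) (by norm_num) |>.1 h)
    · exact hprime.not_unit (isUnit_of_dvd_one ⟨-((θ - 1) * k * θ), by linear_combination h⟩)
  · have h1 : (θ - 1) ^ 2 * (1 - (θ - 1) ^ 2 * k * θ) = 0 := by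
      linear_combination hlamsq + θ * hk
    rcases mul_eq_zero.1 h1 with h | h
    · exact hprime.ne_zero (pow_eq_zero_iff (n := 2) (by norm_num) |>.1 h)
    · exact hprime.not_unit (isUnit_of_dvd_one ⟨(θ - 1) * k * θ, by linear_combination h⟩)

section eisenstein

open NumberField IsCyclotomicExtension.Rat.Three

variable {K : Type*} [Field K]
variable {ζ : K} (hζ : IsPrimitiveRoot ζ 3)


/-- `FermatLastTheoremForThreeGen` is the statement that `a ^ 3 + b ^ 3 = u * c ^ 3` has no
nontrivial solutions in `𝓞 K` for all `u : (𝓞 K)ˣ` such that `¬ (hζ.toInteger - 1) ∣ a`, `¬ (hζ.toInteger - 1) ∣ b` and `(hζ.toInteger - 1) ∣ c`.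
The reason to consider `FermatLastTheoremForThreeGen` is to make a descent argument working. -/
def FermatLastTheoremForThreeGen : Prop :=
  ∀ a b c : 𝓞 K, ∀ u : (𝓞 K)ˣ, c ≠ 0 → ¬ (hζ.toInteger - 1) ∣ a → ¬ (hζ.toInteger - 1) ∣ b → (hζ.toInteger - 1) ∣ c → IsCoprime a b →
    a ^ 3 + b ^ 3 ≠ u * c ^ 3

namespace FermatLastTheoremForThreeGen

/-- `Solution'` is a tuple given by a solution to `a ^ 3 + b ^ 3 = u * c ^ 3`,
where `a`, `b`, `c` and `u` are as in `FermatLastTheoremForThreeGen`.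
See `Solution` for the actual structure on which we will do the descent. -/
structure Solution' where
  a : 𝓞 K
  b : 𝓞 K
  c : 𝓞 K
  u : (𝓞 K)ˣ
  ha : ¬ (hζ.toInteger - 1) ∣ a
  hb : ¬ (hζ.toInteger - 1) ∣ b
  hc : c ≠ 0
  coprime : IsCoprime a b
  hcdvd : (hζ.toInteger - 1) ∣ c
  H : a ^ 3 + b ^ 3 = u * c ^ 3

/-- `Solution` is the same as `Solution'` with the additional assumption that `(hζ.toInteger - 1) ^ 2 ∣ a + b`. -/
structure Solution extends Solution' hζ where
  hab : (hζ.toInteger - 1) ^ 2 ∣ a + b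

variable {hζ}
variable (S : Solution hζ) (S' : Solution' hζ)

section IsCyclotomicExtension

variable [NumberField K] [IsCyclotomicExtension {3} ℚ K]

/-- For any `S' : Solution'`, the multiplicity of `(hζ.toInteger - 1)` in `S'.c` is finite. -/
lemma Solution'.multiplicity_lambda_c_finite :
    FiniteMultiplicity (hζ.toInteger - 1) S'.c :=
  .of_not_isUnit hζ.zeta_sub_one_prime'.not_isUnit S'.hc

/-- Given `S' : Solution'`, `S'.multiplicity` is the multiplicity of `(hζ.toInteger - 1)` in `S'.c`, as a natural
number. -/
noncomputable def Solution'.multiplicity :=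
  _root_.multiplicity (hζ.toInteger - 1) S'.c

/-- Given `S : Solution`, `S.multiplicity` is the multiplicity of `(hζ.toInteger - 1)` in `S.c`, as a natural
number. -/
noncomputable def Solution.multiplicity := S.toSolution'.multiplicity

/-- We say that `S : Solution` is minimal if for all `S₁ : Solution`, the multiplicity of `(hζ.toInteger - 1)` in
`S.c` is less or equal than the multiplicity in `S₁.c`. -/
def Solution.isMinimal : Prop := ∀ (S₁ : Solution hζ), S.multiplicity ≤ S₁.multiplicity

/-- If there is a solution then there is a minimal one. -/
lemma Solution.exists_minimal (S : Solution hζ) : ∃ (S₁ : Solution hζ), S₁.isMinimal := by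
  classical
  let T := {n | ∃ (S' : Solution hζ), S'.multiplicity = n}
  rcases Nat.find_spec (⟨S.multiplicity, ⟨S, rfl⟩⟩ : T.Nonempty) with ⟨S₁, hS₁⟩
  exact ⟨S₁, fun S'' ↦ hS₁ ▸ Nat.find_min' _ ⟨S'', rfl⟩⟩

/-- Given `S' : Solution'`, then `S'.a` and `S'.b` are both congruent to `1` modulo `(hζ.toInteger - 1) ^ 4` or are
both congruent to `-1`. -/
lemma a_cube_b_cube_congr_one_or_neg_one :
    (hζ.toInteger - 1) ^ 4 ∣ S'.a ^ 3 - 1 ∧ (hζ.toInteger - 1) ^ 4 ∣ S'.b ^ 3 + 1 ∨ (hζ.toInteger - 1) ^ 4 ∣ S'.a ^ 3 + 1 ∧ (hζ.toInteger - 1) ^ 4 ∣ S'.b ^ 3 - 1 := by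
  obtain ⟨z, hz⟩ := S'.hcdvd
  rcases lambda_pow_four_dvd_cube_sub_one_or_add_one_of_lambda_not_dvd hζ S'.ha with
    ⟨x, hx⟩ | ⟨x, hx⟩ <;>
  rcases lambda_pow_four_dvd_cube_sub_one_or_add_one_of_lambda_not_dvd hζ S'.hb with
    ⟨y, hy⟩ | ⟨y, hy⟩
  · exfalso
    replace hζ : IsPrimitiveRoot ζ (3 ^ 1) := by rwa [pow_one]
    refine hζ.toInteger_sub_one_not_dvd_two (by decide) ⟨S'.u * (hζ.toInteger - 1) ^ 2 * z ^ 3 - (hζ.toInteger - 1) ^ 3 * (x + y), ?_⟩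
    symm
    calc _ = S'.u * ((hζ.toInteger - 1) * z) ^ 3 - (hζ.toInteger - 1) ^ 4 * x - (hζ.toInteger - 1) ^ 4 * y := by ring
    _ = (S'.a ^ 3 + S'.b ^ 3) - (S'.a ^ 3 - 1) - (S'.b ^ 3 - 1) := by rw [← hx, ← hy, ← hz, ← S'.H]
    _ = 2 := by ring
  · left
    exact ⟨⟨x, hx⟩, ⟨y, hy⟩⟩
  · right
    exact ⟨⟨x, hx⟩, ⟨y, hy⟩⟩
  · exfalso
    replace hζ : IsPrimitiveRoot ζ (3 ^ 1) := by rwa [pow_one]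
    refine hζ.toInteger_sub_one_not_dvd_two (by decide) ⟨(hζ.toInteger - 1) ^ 3 * (x + y) - S'.u * (hζ.toInteger - 1) ^ 2 * z ^ 3, ?_⟩
    symm
    calc _ = (hζ.toInteger - 1) ^ 4 * x + (hζ.toInteger - 1) ^ 4 * y - S'.u * ((hζ.toInteger - 1) * z) ^ 3 := by ring
    _ = (S'.a ^ 3 + 1) + (S'.b ^ 3 + 1) - (S'.a ^ 3 + S'.b ^ 3) := by rw [← hx, ← hy, ← hz, ← S'.H]
    _ = 2 := by ring

/-- Given `S' : Solution'`, we have that `(hζ.toInteger - 1) ^ 4` divides `S'.c ^ 3`. -/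
lemma lambda_pow_four_dvd_c_cube : (hζ.toInteger - 1) ^ 4 ∣ S'.c ^ 3 := by
  rcases a_cube_b_cube_congr_one_or_neg_one S' with
    ⟨⟨x, hx⟩, ⟨y, hy⟩⟩ | ⟨⟨x, hx⟩, ⟨y, hy⟩⟩ <;>
  · refine ⟨S'.u⁻¹ * (x + y), ?_⟩
    symm
    calc _ = S'.u⁻¹ * ((hζ.toInteger - 1) ^ 4 * x + (hζ.toInteger - 1) ^ 4 * y) := by ring
    _ = S'.u⁻¹ * (S'.a ^ 3 + S'.b ^ 3) := by rw [← hx, ← hy]; ring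
    _ = S'.u⁻¹ * (S'.u * S'.c ^ 3) := by rw [S'.H]
    _ = S'.c ^ 3 := by simp

/-- Given `S' : Solution'`, we have that `(hζ.toInteger - 1) ^ 2` divides `S'.c`. -/
lemma lambda_sq_dvd_c : (hζ.toInteger - 1) ^ 2 ∣ S'.c := by
  have hm := S'.multiplicity_lambda_c_finite
  have := lambda_pow_four_dvd_c_cube S'
  rw [pow_dvd_iff_le_emultiplicity, emultiplicity_pow hζ.zeta_sub_one_prime',
    hm.emultiplicity_eq_multiplicity] at this
  norm_cast at this
  exact (FiniteMultiplicity.pow_dvd_iff_le_multiplicity hm).mpr (by lia)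

/-- Given `S' : Solution'`, we have that `2 ≤ S'.multiplicity`. -/
lemma Solution'.two_le_multiplicity : 2 ≤ S'.multiplicity := by
  simpa [Solution'.multiplicity] using
    S'.multiplicity_lambda_c_finite.le_multiplicity_of_pow_dvd (lambda_sq_dvd_c S')

/-- Given `S : Solution`, we have that `2 ≤ S.multiplicity`. -/
lemma Solution.two_le_multiplicity : 2 ≤ S.multiplicity :=
  S.toSolution'.two_le_multiplicity

end IsCyclotomicExtension

-- This is just a computation and the formulas are too long.
set_option linter.style.whitespace false in
/-- Given `S' : Solution'`, the key factorization of `S'.a ^ 3 + S'.b ^ 3`. -/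
lemma a_cube_add_b_cube_eq_mul :
    S'.a ^ 3 + S'.b ^ 3 = (S'.a + S'.b) * (S'.a + (IsPrimitiveRoot.isUnit (hζ.toInteger_isPrimitiveRoot) (by decide)).unit * S'.b) * (S'.a + (IsPrimitiveRoot.isUnit (hζ.toInteger_isPrimitiveRoot) (by decide)).unit ^ 2 * S'.b) := by
  symm
  calc _ = S'.a^3+S'.a^2*S'.b*((IsPrimitiveRoot.isUnit (hζ.toInteger_isPrimitiveRoot) (by decide)).unit^2+(IsPrimitiveRoot.isUnit (hζ.toInteger_isPrimitiveRoot) (by decide)).unit+1)+S'.a*S'.b^2*((IsPrimitiveRoot.isUnit (hζ.toInteger_isPrimitiveRoot) (by decide)).unit^2+(IsPrimitiveRoot.isUnit (hζ.toInteger_isPrimitiveRoot) (by decide)).unit+(IsPrimitiveRoot.isUnit (hζ.toInteger_isPrimitiveRoot) (by decide)).unit^3)+(IsPrimitiveRoot.isUnit (hζ.toInteger_isPrimitiveRoot) (by decide)).unit^3*S'.b^3 := by ring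
  _ = S'.a^3+S'.a^2*S'.b*((IsPrimitiveRoot.isUnit (hζ.toInteger_isPrimitiveRoot) (by decide)).unit^2+(IsPrimitiveRoot.isUnit (hζ.toInteger_isPrimitiveRoot) (by decide)).unit+1)+S'.a*S'.b^2*((IsPrimitiveRoot.isUnit (hζ.toInteger_isPrimitiveRoot) (by decide)).unit^2+(IsPrimitiveRoot.isUnit (hζ.toInteger_isPrimitiveRoot) (by decide)).unit+1)+S'.b^3 := by
    simp [hζ.toInteger_cube_eq_one]
  _ = S'.a ^ 3 + S'.b ^ 3 := by rw [eta_sq]; ring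

section IsCyclotomicExtension
variable [NumberField K] [IsCyclotomicExtension {3} ℚ K]

/-- Given `S' : Solution'`, we have that `(hζ.toInteger - 1) ^ 2` divides one amongst `S'.a + S'.b`,
`S'.a + (IsPrimitiveRoot.isUnit (hζ.toInteger_isPrimitiveRoot) (by decide)).unit * S'.b` and `S'.a + (IsPrimitiveRoot.isUnit (hζ.toInteger_isPrimitiveRoot) (by decide)).unit ^ 2 * S'.b`. -/
lemma lambda_sq_dvd_or_dvd_or_dvd :
    (hζ.toInteger - 1) ^ 2 ∣ S'.a + S'.b ∨ (hζ.toInteger - 1) ^ 2 ∣ S'.a + (IsPrimitiveRoot.isUnit (hζ.toInteger_isPrimitiveRoot) (by decide)).unit * S'.b ∨ (hζ.toInteger - 1) ^ 2 ∣ S'.a + (IsPrimitiveRoot.isUnit (hζ.toInteger_isPrimitiveRoot) (by decide)).unit ^ 2 * S'.b := by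
  by_contra! ⟨h1, h2, h3⟩
  rw [← emultiplicity_lt_iff_not_dvd] at h1 h2 h3
  have h1' : FiniteMultiplicity (hζ.toInteger - 1) (S'.a + S'.b) :=
    finiteMultiplicity_iff_emultiplicity_ne_top.2 (fun ht ↦ by simp [ht] at h1)
  have h2' : FiniteMultiplicity (hζ.toInteger - 1) (S'.a + (IsPrimitiveRoot.isUnit (hζ.toInteger_isPrimitiveRoot) (by decide)).unit * S'.b) := by
    refine finiteMultiplicity_iff_emultiplicity_ne_top.2 (fun ht ↦ ?_)
    rw [coe_eta] at ht
    simp [ht] at h2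
  have h3' : FiniteMultiplicity (hζ.toInteger - 1) (S'.a + (IsPrimitiveRoot.isUnit (hζ.toInteger_isPrimitiveRoot) (by decide)).unit ^ 2 * S'.b) := by
    refine finiteMultiplicity_iff_emultiplicity_ne_top.2 (fun ht ↦ ?_)
    rw [coe_eta] at ht
    simp [ht] at h3
  rw [h1'.emultiplicity_eq_multiplicity, Nat.cast_lt] at h1
  rw [h2'.emultiplicity_eq_multiplicity, Nat.cast_lt] at h2
  rw [h3'.emultiplicity_eq_multiplicity, Nat.cast_lt] at h3
  have := (pow_dvd_pow_of_dvd (lambda_sq_dvd_c S') 3).mul_left S'.u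
  rw [← pow_mul, ← S'.H, a_cube_add_b_cube_eq_mul, pow_dvd_iff_le_emultiplicity,
    emultiplicity_mul hζ.zeta_sub_one_prime', emultiplicity_mul hζ.zeta_sub_one_prime',
      h1'.emultiplicity_eq_multiplicity, h2'.emultiplicity_eq_multiplicity,
      h3'.emultiplicity_eq_multiplicity, ← Nat.cast_add, ← Nat.cast_add, Nat.cast_le] at this
  lia

open Units in
/-- Given `S' : Solution'`, we may assume that `(hζ.toInteger - 1) ^ 2` divides `S'.a + S'.b ∨ (hζ.toInteger - 1) ^ 2` (see also the
result below). -/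
lemma ex_cube_add_cube_eq_and_isCoprime_and_not_dvd_and_dvd :
    ∃ (a' b' : 𝓞 K), a' ^ 3 + b' ^ 3 = S'.u * S'.c ^ 3 ∧ IsCoprime a' b' ∧ ¬ (hζ.toInteger - 1) ∣ a' ∧
      ¬ (hζ.toInteger - 1) ∣ b' ∧ (hζ.toInteger - 1) ^ 2 ∣ a' + b' := by
  rcases lambda_sq_dvd_or_dvd_or_dvd S' with h | h | h
  · exact ⟨S'.a, S'.b, S'.H, S'.coprime, S'.ha, S'.hb, h⟩
  · refine ⟨S'.a, (IsPrimitiveRoot.isUnit (hζ.toInteger_isPrimitiveRoot) (by decide)).unit * S'.b, ?_, ?_, S'.ha, fun ⟨x, hx⟩ ↦ S'.hb ⟨(IsPrimitiveRoot.isUnit (hζ.toInteger_isPrimitiveRoot) (by decide)).unit ^ 2 * x, ?_⟩, h⟩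
    · simp [mul_pow, hζ.toInteger_cube_eq_one, one_mul, S'.H]
    · refine (isCoprime_mul_unit_left_right (Units.isUnit (IsPrimitiveRoot.isUnit (hζ.toInteger_isPrimitiveRoot) (by decide)).unit) _ _).2 S'.coprime
    · rw [mul_comm _ x, ← mul_assoc, ← hx, mul_comm _ S'.b, mul_assoc, ← pow_succ', coe_eta,
        hζ.toInteger_cube_eq_one, mul_one]
  · refine ⟨S'.a, (IsPrimitiveRoot.isUnit (hζ.toInteger_isPrimitiveRoot) (by decide)).unit ^ 2 * S'.b, ?_, ?_, S'.ha, fun ⟨x, hx⟩ ↦ S'.hb ⟨(IsPrimitiveRoot.isUnit (hζ.toInteger_isPrimitiveRoot) (by decide)).unit * x, ?_⟩, h⟩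
    · rw [mul_pow, ← pow_mul, mul_comm 2, pow_mul, coe_eta, hζ.toInteger_cube_eq_one, one_pow,
        one_mul, S'.H]
    · exact (isCoprime_mul_unit_left_right ((Units.isUnit (IsPrimitiveRoot.isUnit (hζ.toInteger_isPrimitiveRoot) (by decide)).unit).pow _) _ _).2 S'.coprime
    · rw [mul_comm _ x, ← mul_assoc, ← hx, mul_comm _ S'.b, mul_assoc, ← pow_succ, coe_eta,
        hζ.toInteger_cube_eq_one, mul_one]

/-- Given `S' : Solution'`, then there is `S₁ : Solution` such that
`S₁.multiplicity = S'.multiplicity`. -/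
lemma exists_Solution_of_Solution' : ∃ (S₁ : Solution hζ), S₁.multiplicity = S'.multiplicity := by
  obtain ⟨a, b, H, coprime, ha, hb, hab⟩ := ex_cube_add_cube_eq_and_isCoprime_and_not_dvd_and_dvd S'
  exact ⟨
  { a := a
    b := b
    c := S'.c
    u := S'.u
    ha := ha
    hb := hb
    hc := S'.hc
    coprime := coprime
    hcdvd := S'.hcdvd
    H := H
    hab := hab }, rfl⟩

end IsCyclotomicExtension

namespace Solution

lemma a_add_eta_mul_b : S.a + (IsPrimitiveRoot.isUnit (hζ.toInteger_isPrimitiveRoot) (by decide)).unit * S.b = (S.a + S.b) + (hζ.toInteger - 1) * S.b := by rw [coe_eta]; ring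

/-- Given `(S : Solution)`, we have that `(hζ.toInteger - 1) ∣ (S.a + (IsPrimitiveRoot.isUnit (hζ.toInteger_isPrimitiveRoot) (by decide)).unit * S.b)`. -/
lemma lambda_dvd_a_add_eta_mul_b : (hζ.toInteger - 1) ∣ (S.a + (IsPrimitiveRoot.isUnit (hζ.toInteger_isPrimitiveRoot) (by decide)).unit * S.b) :=
  a_add_eta_mul_b S ▸ dvd_add (dvd_trans (dvd_pow_self _ (by decide)) S.hab) ⟨S.b, by rw [mul_comm]⟩

/-- Given `(S : Solution)`, we have that `(hζ.toInteger - 1) ∣ (S.a + (IsPrimitiveRoot.isUnit (hζ.toInteger_isPrimitiveRoot) (by decide)).unit ^ 2 * S.b)`. -/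
lemma lambda_dvd_a_add_eta_sq_mul_b : (hζ.toInteger - 1) ∣ (S.a + (IsPrimitiveRoot.isUnit (hζ.toInteger_isPrimitiveRoot) (by decide)).unit ^ 2 * S.b) := by
  rw [show S.a + (IsPrimitiveRoot.isUnit (hζ.toInteger_isPrimitiveRoot) (by decide)).unit ^ 2 * S.b = (S.a + S.b) + (hζ.toInteger - 1) ^ 2 * S.b + 2 * (hζ.toInteger - 1) * S.b by rw [coe_eta]; ring]
  exact dvd_add (dvd_add (dvd_trans (dvd_pow_self _ (by decide)) S.hab) ⟨(hζ.toInteger - 1) * S.b, by ring⟩)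
    ⟨2 * S.b, by ring⟩

section IsCyclotomicExtension

variable [NumberField K] [IsCyclotomicExtension {3} ℚ K]

/-- Given `(S : Solution)`, we have that `(hζ.toInteger - 1) ^ 2` does not divide `S.a + (IsPrimitiveRoot.isUnit (hζ.toInteger_isPrimitiveRoot) (by decide)).unit * S.b`. -/
lemma lambda_sq_not_dvd_a_add_eta_mul_b : ¬ (hζ.toInteger - 1) ^ 2 ∣ (S.a + (IsPrimitiveRoot.isUnit (hζ.toInteger_isPrimitiveRoot) (by decide)).unit * S.b) := by
  simp_rw [a_add_eta_mul_b, dvd_add_right S.hab, pow_two, mul_dvd_mul_iff_left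
    hζ.zeta_sub_one_prime'.ne_zero, S.hb, not_false_eq_true]

/-- Given `(S : Solution)`, we have that `(hζ.toInteger - 1) ^ 2` does not divide `S.a + (IsPrimitiveRoot.isUnit (hζ.toInteger_isPrimitiveRoot) (by decide)).unit ^ 2 * S.b`. -/
lemma lambda_sq_not_dvd_a_add_eta_sq_mul_b : ¬ (hζ.toInteger - 1) ^ 2 ∣ (S.a + (IsPrimitiveRoot.isUnit (hζ.toInteger_isPrimitiveRoot) (by decide)).unit ^ 2 * S.b) := by
  intro ⟨k, hk⟩
  rcases S.hab with ⟨k', hk'⟩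
  refine S.hb ⟨(k - k') * (-(IsPrimitiveRoot.isUnit (hζ.toInteger_isPrimitiveRoot) (by decide)).unit), ?_⟩
  rw [show S.a + (IsPrimitiveRoot.isUnit (hζ.toInteger_isPrimitiveRoot) (by decide)).unit ^ 2 * S.b = S.a + S.b - S.b + (IsPrimitiveRoot.isUnit (hζ.toInteger_isPrimitiveRoot) (by decide)).unit ^ 2 * S.b by ring, hk',
    show (hζ.toInteger - 1) ^ 2 * k' - S.b + (IsPrimitiveRoot.isUnit (hζ.toInteger_isPrimitiveRoot) (by decide)).unit ^ 2 * S.b = (hζ.toInteger - 1) * (S.b * ((IsPrimitiveRoot.isUnit (hζ.toInteger_isPrimitiveRoot) (by decide)).unit + 1) + (hζ.toInteger - 1) * k') by rw [coe_eta]; ring,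
    pow_two, mul_assoc] at hk
  simp only [mul_eq_mul_left_iff, hζ.zeta_sub_one_prime'.ne_zero, or_false] at hk
  apply_fun (· * -↑(IsPrimitiveRoot.isUnit (hζ.toInteger_isPrimitiveRoot) (by decide)).unit) at hk
  rw [show (S.b * ((IsPrimitiveRoot.isUnit (hζ.toInteger_isPrimitiveRoot) (by decide)).unit + 1) + (hζ.toInteger - 1) * k') * -(IsPrimitiveRoot.isUnit (hζ.toInteger_isPrimitiveRoot) (by decide)).unit = (-S.b) * ((IsPrimitiveRoot.isUnit (hζ.toInteger_isPrimitiveRoot) (by decide)).unit ^ 2 + (IsPrimitiveRoot.isUnit (hζ.toInteger_isPrimitiveRoot) (by decide)).unit + 1 - 1) - (IsPrimitiveRoot.isUnit (hζ.toInteger_isPrimitiveRoot) (by decide)).unit * (hζ.toInteger - 1) * k' by ring,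
    eta_sq, show -S.b * (-↑(IsPrimitiveRoot.isUnit (hζ.toInteger_isPrimitiveRoot) (by decide)).unit - 1 + ↑(IsPrimitiveRoot.isUnit (hζ.toInteger_isPrimitiveRoot) (by decide)).unit + 1 - 1) = S.b by ring, sub_eq_iff_eq_add] at hk
  rw [hk]
  ring

attribute [local instance] IsCyclotomicExtension.Rat.three_pid
attribute [local instance] UniqueFactorizationMonoid.toGCDMonoid

/-- If `p : 𝓞 K` is a prime that divides both `S.a + S.b` and `S.a + (IsPrimitiveRoot.isUnit (hζ.toInteger_isPrimitiveRoot) (by decide)).unit * S.b`, then `p`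
is associated with `(hζ.toInteger - 1)`. -/
lemma associated_of_dvd_a_add_b_of_dvd_a_add_eta_mul_b {p : 𝓞 K} (hp : Prime p)
    (hpab : p ∣ S.a + S.b) (hpaηb : p ∣ S.a + (IsPrimitiveRoot.isUnit (hζ.toInteger_isPrimitiveRoot) (by decide)).unit * S.b) : Associated p (hζ.toInteger - 1) := by
  suffices p_lam : p ∣ (hζ.toInteger - 1) from hp.associated_of_dvd hζ.zeta_sub_one_prime' p_lam
  rw [← one_mul S.a, ← one_mul S.b] at hpab
  rw [← one_mul S.a] at hpaηb
  have := dvd_mul_sub_mul_mul_gcd_of_dvd hpab hpaηb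
  rwa [one_mul, one_mul, coe_eta, IsUnit.dvd_mul_right <| (gcd_isUnit_iff _ _).2 S.coprime] at this

/-- If `p : 𝓞 K` is a prime that divides both `S.a + S.b` and `S.a + (IsPrimitiveRoot.isUnit (hζ.toInteger_isPrimitiveRoot) (by decide)).unit ^ 2 * S.b`, then `p`
is associated with `(hζ.toInteger - 1)`. -/
lemma associated_of_dvd_a_add_b_of_dvd_a_add_eta_sq_mul_b {p : 𝓞 K} (hp : Prime p)
    (hpab : p ∣ (S.a + S.b)) (hpaηsqb : p ∣ (S.a + (IsPrimitiveRoot.isUnit (hζ.toInteger_isPrimitiveRoot) (by decide)).unit ^ 2 * S.b)) : Associated p (hζ.toInteger - 1) := by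
  suffices p_lam : p ∣ (hζ.toInteger - 1) from hp.associated_of_dvd hζ.zeta_sub_one_prime' p_lam
  rw [← one_mul S.a, ← one_mul S.b] at hpab
  rw [← one_mul S.a] at hpaηsqb
  have := dvd_mul_sub_mul_mul_gcd_of_dvd hpab hpaηsqb
  rw [one_mul, mul_one, IsUnit.dvd_mul_right <| (gcd_isUnit_iff _ _).2 S.coprime, ← dvd_neg] at this
  convert! dvd_mul_of_dvd_left this (IsPrimitiveRoot.isUnit (hζ.toInteger_isPrimitiveRoot) (by decide)).unit using 1
  rw [eta_sq, neg_sub, sub_mul, sub_mul, neg_mul, ← pow_two, eta_sq, coe_eta]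
  ring

/-- If `p : 𝓞 K` is a prime that divides both `S.a + (IsPrimitiveRoot.isUnit (hζ.toInteger_isPrimitiveRoot) (by decide)).unit * S.b` and `S.a + (IsPrimitiveRoot.isUnit (hζ.toInteger_isPrimitiveRoot) (by decide)).unit ^ 2 * S.b`, then `p`
is associated with `(hζ.toInteger - 1)`. -/
lemma associated_of_dvd_a_add_eta_mul_b_of_dvd_a_add_eta_sq_mul_b {p : 𝓞 K} (hp : Prime p)
    (hpaηb : p ∣ S.a + (IsPrimitiveRoot.isUnit (hζ.toInteger_isPrimitiveRoot) (by decide)).unit * S.b) (hpaηsqb : p ∣ S.a + (IsPrimitiveRoot.isUnit (hζ.toInteger_isPrimitiveRoot) (by decide)).unit ^ 2 * S.b) : Associated p (hζ.toInteger - 1) := by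
  suffices p_lam : p ∣ (hζ.toInteger - 1) from hp.associated_of_dvd hζ.zeta_sub_one_prime' p_lam
  rw [← one_mul S.a] at hpaηb
  rw [← one_mul S.a] at hpaηsqb
  have := dvd_mul_sub_mul_mul_gcd_of_dvd hpaηb hpaηsqb
  rw [one_mul, mul_one, IsUnit.dvd_mul_right <| (gcd_isUnit_iff _ _).2 S.coprime] at this
  convert! (dvd_mul_of_dvd_left (dvd_mul_of_dvd_left this (IsPrimitiveRoot.isUnit (hζ.toInteger_isPrimitiveRoot) (by decide)).unit) (IsPrimitiveRoot.isUnit (hζ.toInteger_isPrimitiveRoot) (by decide)).unit) using 1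
  symm
  calc _ = (-(IsPrimitiveRoot.isUnit (hζ.toInteger_isPrimitiveRoot) (by decide)).unit.1 - 1 - (IsPrimitiveRoot.isUnit (hζ.toInteger_isPrimitiveRoot) (by decide)).unit) * (-(IsPrimitiveRoot.isUnit (hζ.toInteger_isPrimitiveRoot) (by decide)).unit - 1) := by rw [eta_sq, mul_assoc, ← pow_two, eta_sq]
  _ = 2 * (IsPrimitiveRoot.isUnit (hζ.toInteger_isPrimitiveRoot) (by decide)).unit.1 ^ 2 + 3 * (IsPrimitiveRoot.isUnit (hζ.toInteger_isPrimitiveRoot) (by decide)).unit + 1 := by ring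
  _ = (hζ.toInteger - 1) := by rw [eta_sq, coe_eta]; ring

end IsCyclotomicExtension

/-- Given `S : Solution`, we let `S.y` be any element such that `S.a + (IsPrimitiveRoot.isUnit (hζ.toInteger_isPrimitiveRoot) (by decide)).unit * S.b = (hζ.toInteger - 1) * S.y` -/
noncomputable def y := (lambda_dvd_a_add_eta_mul_b S).choose
lemma y_spec : S.a + (IsPrimitiveRoot.isUnit (hζ.toInteger_isPrimitiveRoot) (by decide)).unit * S.b = (hζ.toInteger - 1) * S.y :=
  (lambda_dvd_a_add_eta_mul_b S).choose_spec

/-- Given `S : Solution`, we let `S.z` be any element such that `S.a + (IsPrimitiveRoot.isUnit (hζ.toInteger_isPrimitiveRoot) (by decide)).unit ^ 2 * S.b = (hζ.toInteger - 1) * S.z` -/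
noncomputable def z := (lambda_dvd_a_add_eta_sq_mul_b S).choose
lemma z_spec : S.a + (IsPrimitiveRoot.isUnit (hζ.toInteger_isPrimitiveRoot) (by decide)).unit ^ 2 * S.b = (hζ.toInteger - 1) * S.z :=
  (lambda_dvd_a_add_eta_sq_mul_b S).choose_spec

variable [NumberField K] [IsCyclotomicExtension {3} ℚ K]

lemma lambda_not_dvd_y : ¬ (hζ.toInteger - 1) ∣ S.y := fun h ↦ by
  replace h := mul_dvd_mul_left (((IsPrimitiveRoot.isUnit (hζ.toInteger_isPrimitiveRoot) (by decide)).unit : 𝓞 K) - 1) h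
  rw [coe_eta, ← y_spec, ← pow_two] at h
  exact lambda_sq_not_dvd_a_add_eta_mul_b _ h

lemma lambda_not_dvd_z : ¬ (hζ.toInteger - 1) ∣ S.z := fun h ↦ by
  replace h := mul_dvd_mul_left (((IsPrimitiveRoot.isUnit (hζ.toInteger_isPrimitiveRoot) (by decide)).unit : 𝓞 K) - 1) h
  rw [coe_eta, ← z_spec, ← pow_two] at h
  exact lambda_sq_not_dvd_a_add_eta_sq_mul_b _ h

/-- We have that `(hζ.toInteger - 1) ^ (3*S.multiplicity-2)` divides `S.a + S.b`. -/
lemma lambda_pow_dvd_a_add_b : (hζ.toInteger - 1) ^ (3 * S.multiplicity - 2) ∣ S.a + S.b := by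
  have h : (hζ.toInteger - 1) ^ S.multiplicity ∣ S.c := pow_multiplicity_dvd _ _
  replace h : ((hζ.toInteger - 1) ^ multiplicity S) ^ 3 ∣ S.u * S.c ^ 3 := by simp [h]
  rw [← S.H, a_cube_add_b_cube_eq_mul, ← pow_mul, mul_comm, y_spec, z_spec] at h
  apply hζ.zeta_sub_one_prime'.pow_dvd_of_dvd_mul_left _ S.lambda_not_dvd_z
  apply hζ.zeta_sub_one_prime'.pow_dvd_of_dvd_mul_left _ S.lambda_not_dvd_y
  have := S.two_le_multiplicity
  rw [show 3 * multiplicity S = 3 * multiplicity S - 2 + 1 + 1 by lia, pow_succ, pow_succ,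
    show (S.a + S.b) * ((hζ.toInteger - 1) * y S) * ((hζ.toInteger - 1) * z S) = (S.a + S.b) * y S * z S * (hζ.toInteger - 1) * (hζ.toInteger - 1) by ring] at h
  simp only [mul_dvd_mul_iff_right hζ.zeta_sub_one_prime'.ne_zero] at h
  rwa [show (S.a + S.b) * y S * z S = y S * (z S * (S.a + S.b)) by ring] at h

/-- Given `S : Solution`, we let `S.x` be any element such that
`S.a + S.b = (hζ.toInteger - 1) ^ (3*S.multiplicity-2) * S.x` -/
noncomputable def x := (lambda_pow_dvd_a_add_b S).choose
lemma x_spec : S.a + S.b = (hζ.toInteger - 1) ^ (3 * S.multiplicity - 2) * S.x :=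
  (lambda_pow_dvd_a_add_b S).choose_spec

/-- Given `S : Solution`, we let `S.w` be any element such that `S.c = (hζ.toInteger - 1) ^ S.multiplicity * S.w` -/
noncomputable def w :=
  (pow_multiplicity_dvd (hζ.toInteger - 1) S.c).choose

lemma w_spec : S.c = (hζ.toInteger - 1) ^ S.multiplicity * S.w :=
  (pow_multiplicity_dvd (hζ.toInteger - 1) S.c).choose_spec

lemma lambda_not_dvd_w : ¬ (hζ.toInteger - 1) ∣ S.w := fun h ↦ by
  refine S.toSolution'.multiplicity_lambda_c_finite.not_pow_dvd_of_multiplicity_lt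
    (lt_add_one S.multiplicity) ?_
  rw [pow_succ', mul_comm]
  exact S.w_spec ▸ (mul_dvd_mul_left ((hζ.toInteger - 1) ^ S.multiplicity) h)

lemma lambda_not_dvd_x : ¬ (hζ.toInteger - 1) ∣ S.x := fun h ↦ by
  replace h := mul_dvd_mul_left ((hζ.toInteger - 1) ^ (3 * S.multiplicity - 2)) h
  rw [mul_comm, ← x_spec] at h
  replace h :=
    mul_dvd_mul (mul_dvd_mul h S.lambda_dvd_a_add_eta_mul_b) S.lambda_dvd_a_add_eta_sq_mul_b
  simp only [← a_cube_add_b_cube_eq_mul, S.H, w_spec, Units.isUnit, IsUnit.dvd_mul_left] at h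
  rw [← pow_succ', mul_comm, ← mul_assoc, ← pow_succ'] at h
  have := S.two_le_multiplicity
  rw [show 3 * multiplicity S - 2 + 1 + 1 = 3 * multiplicity S by lia, mul_pow, ← pow_mul,
    mul_comm _ 3, mul_dvd_mul_iff_left _] at h
  · exact lambda_not_dvd_w _ <| hζ.zeta_sub_one_prime'.dvd_of_dvd_pow h
  · simp [hζ.zeta_sub_one_prime'.ne_zero]

attribute [local instance] IsCyclotomicExtension.Rat.three_pid

lemma isCoprime_helper {r s t w : 𝓞 K} (hr : ¬ (hζ.toInteger - 1) ∣ r) (hs : ¬ (hζ.toInteger - 1) ∣ s)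
    (Hp : ∀ {p}, Prime p → p ∣ t → p ∣ w → Associated p (hζ.toInteger - 1)) (H₁ : ∀ {q}, q ∣ r → q ∣ t)
    (H₂ : ∀ {q}, q ∣ s → q ∣ w) : IsCoprime r s := by
  refine isCoprime_of_prime_dvd (not_and.2 (fun _ hz ↦ hs (by simp [hz])))
    (fun p hp p_dvd_r p_dvd_s ↦ hr ?_)
  rwa [← Associated.dvd_iff_dvd_left <| Hp hp (H₁ p_dvd_r) (H₂ p_dvd_s)]

lemma isCoprime_x_y : IsCoprime S.x S.y :=
  isCoprime_helper (lambda_not_dvd_x S) (lambda_not_dvd_y S)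
    (associated_of_dvd_a_add_b_of_dvd_a_add_eta_mul_b S) (fun hq ↦ x_spec S ▸ hq.mul_left _)
      (fun hq ↦ y_spec S ▸ hq.mul_left _)

lemma isCoprime_x_z : IsCoprime S.x S.z :=
  isCoprime_helper (lambda_not_dvd_x S) (lambda_not_dvd_z S)
    (associated_of_dvd_a_add_b_of_dvd_a_add_eta_sq_mul_b S) (fun hq ↦ x_spec S ▸ hq.mul_left _)
      (fun hq ↦ z_spec S ▸ hq.mul_left _)

lemma isCoprime_y_z : IsCoprime S.y S.z :=
  isCoprime_helper (lambda_not_dvd_y S) (lambda_not_dvd_z S)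
    (associated_of_dvd_a_add_eta_mul_b_of_dvd_a_add_eta_sq_mul_b S)
    (fun hq ↦ y_spec S ▸ hq.mul_left _) (fun hq ↦ z_spec S ▸ hq.mul_left _)

lemma x_mul_y_mul_z_eq_u_mul_w_cube : S.x * S.y * S.z = S.u * S.w ^ 3 := by
  suffices hh : (hζ.toInteger - 1) ^ (3 * S.multiplicity - 2) * S.x * (hζ.toInteger - 1) * S.y * (hζ.toInteger - 1) * S.z =
      S.u * (hζ.toInteger - 1) ^ (3 * S.multiplicity) * S.w ^ 3 by
    rw [show (hζ.toInteger - 1) ^ (3 * multiplicity S - 2) * x S * (hζ.toInteger - 1) * y S * (hζ.toInteger - 1) * z S =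
      (hζ.toInteger - 1) ^ (3 * multiplicity S - 2) * (hζ.toInteger - 1) * (hζ.toInteger - 1) * x S * y S * z S by ring] at hh
    have := S.two_le_multiplicity
    rw [mul_comm _ ((hζ.toInteger - 1) ^ (3 * multiplicity S)), ← pow_succ, ← pow_succ,
      show 3 * multiplicity S - 2 + 1 + 1 = 3 * multiplicity S by lia, mul_assoc, mul_assoc,
      mul_assoc] at hh
    simp only [mul_eq_mul_left_iff, pow_eq_zero_iff', hζ.zeta_sub_one_prime'.ne_zero, ne_eq,
      mul_eq_zero, OfNat.ofNat_ne_zero, false_or, false_and, or_false] at hh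
    convert! hh using 1
    ring
  simp only [← x_spec, mul_assoc, ← y_spec, ← z_spec]
  rw [mul_comm 3, pow_mul, ← mul_pow, ← w_spec, ← S.H, a_cube_add_b_cube_eq_mul]
  ring

lemma exists_cube_associated :
    (∃ X, Associated (X ^ 3) S.x) ∧ (∃ Y, Associated (Y ^ 3) S.y) ∧
      ∃ Z, Associated (Z ^ 3) S.z := by
  have h₁ := S.isCoprime_x_z.mul_left S.isCoprime_y_z
  have h₂ : Associated (S.w ^ 3) (S.x * S.y * S.z) :=
    ⟨S.u, by rw [x_mul_y_mul_z_eq_u_mul_w_cube S, mul_comm]⟩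
  obtain ⟨T, h₃⟩ := exists_associated_pow_of_associated_pow_mul h₁ h₂
  exact ⟨exists_associated_pow_of_associated_pow_mul S.isCoprime_x_y h₃,
    exists_associated_pow_of_associated_pow_mul S.isCoprime_x_y.symm (mul_comm _ S.x ▸ h₃),
    exists_associated_pow_of_associated_pow_mul h₁.symm (mul_comm _ S.z ▸ h₂)⟩

/-- Given `S : Solution`, we let `S.u₁` and `S.X` be any elements such that
`S.X ^ 3 * S.u₁ = S.x` -/
noncomputable def X := (exists_cube_associated S).1.choose
noncomputable def u₁ := (exists_cube_associated S).1.choose_spec.choose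
lemma X_u₁_spec : S.X ^ 3 * S.u₁ = S.x :=
  (exists_cube_associated S).1.choose_spec.choose_spec

/-- Given `S : Solution`, we let `S.u₂` and `S.Y` be any elements such that
`S.Y ^ 3 * S.u₂ = S.y` -/
noncomputable def Y := (exists_cube_associated S).2.1.choose
noncomputable def u₂ := (exists_cube_associated S).2.1.choose_spec.choose
lemma Y_u₂_spec : S.Y ^ 3 * S.u₂ = S.y :=
  (exists_cube_associated S).2.1.choose_spec.choose_spec

/-- Given `S : Solution`, we let `S.u₃` and `S.Z` be any elements such that
`S.Z ^ 3 * S.u₃ = S.z` -/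
noncomputable def Z := (exists_cube_associated S).2.2.choose
noncomputable def u₃ := (exists_cube_associated S).2.2.choose_spec.choose
lemma Z_u₃_spec : S.Z ^ 3 * S.u₃ = S.z :=
  (exists_cube_associated S).2.2.choose_spec.choose_spec

lemma X_ne_zero : S.X ≠ 0 :=
  fun h ↦ lambda_not_dvd_x S <| by simp [← X_u₁_spec, h]

lemma lambda_not_dvd_X : ¬ (hζ.toInteger - 1) ∣ S.X :=
  fun h ↦ lambda_not_dvd_x S <| X_u₁_spec S ▸ dvd_mul_of_dvd_left (dvd_pow h (by decide)) _

lemma lambda_not_dvd_Y : ¬ (hζ.toInteger - 1) ∣ S.Y :=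
  fun h ↦ lambda_not_dvd_y S <| Y_u₂_spec S ▸ dvd_mul_of_dvd_left (dvd_pow h (by decide)) _

lemma lambda_not_dvd_Z : ¬ (hζ.toInteger - 1) ∣ S.Z :=
  fun h ↦ lambda_not_dvd_z S <| Z_u₃_spec S ▸ dvd_mul_of_dvd_left (dvd_pow h (by decide)) _

lemma isCoprime_Y_Z : IsCoprime S.Y S.Z := by
  rw [← IsCoprime.pow_iff (m := 3) (n := 3) (by decide) (by decide),
    ← isCoprime_mul_unit_right_left S.u₂.isUnit, ← isCoprime_mul_unit_right_right S.u₃.isUnit,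
    Y_u₂_spec, Z_u₃_spec]
  exact isCoprime_y_z S

-- This is just a computation and the formulas are too long.
set_option linter.style.whitespace false in
lemma formula1 : S.X^3*S.u₁*(hζ.toInteger - 1)^(3*S.multiplicity-2)+S.Y^3*S.u₂*(hζ.toInteger - 1)*(IsPrimitiveRoot.isUnit (hζ.toInteger_isPrimitiveRoot) (by decide)).unit+S.Z^3*S.u₃*(hζ.toInteger - 1)*(IsPrimitiveRoot.isUnit (hζ.toInteger_isPrimitiveRoot) (by decide)).unit^2 = 0 := by
  rw [X_u₁_spec, Y_u₂_spec, Z_u₃_spec, mul_comm S.x, ← x_spec, mul_comm S.y, ← y_spec, mul_comm S.z,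
    ← z_spec, eta_sq]
  calc _ = S.a+S.b+(IsPrimitiveRoot.isUnit (hζ.toInteger_isPrimitiveRoot) (by decide)).unit^2*S.b-S.a+(IsPrimitiveRoot.isUnit (hζ.toInteger_isPrimitiveRoot) (by decide)).unit^2*S.b+2*(IsPrimitiveRoot.isUnit (hζ.toInteger_isPrimitiveRoot) (by decide)).unit*S.b+S.b := by ring
  _ = 0 := by rw [eta_sq]; ring

/-- Let `u₄ := (IsPrimitiveRoot.isUnit (hζ.toInteger_isPrimitiveRoot) (by decide)).unit * S.u₃ * S.u₂⁻¹` -/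
noncomputable def u₄ := (IsPrimitiveRoot.isUnit (hζ.toInteger_isPrimitiveRoot) (by decide)).unit * S.u₃ * S.u₂⁻¹
lemma u₄_def : S.u₄ = (IsPrimitiveRoot.isUnit (hζ.toInteger_isPrimitiveRoot) (by decide)).unit * S.u₃ * S.u₂⁻¹ := rfl
/-- Let `u₅ := -(IsPrimitiveRoot.isUnit (hζ.toInteger_isPrimitiveRoot) (by decide)).unit ^ 2 * S.u₁ * S.u₂⁻¹` -/
noncomputable def u₅ := -(IsPrimitiveRoot.isUnit (hζ.toInteger_isPrimitiveRoot) (by decide)).unit ^ 2 * S.u₁ * S.u₂⁻¹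
lemma u₅_def : S.u₅ = -(IsPrimitiveRoot.isUnit (hζ.toInteger_isPrimitiveRoot) (by decide)).unit ^ 2 * S.u₁ * S.u₂⁻¹ := rfl

-- This is just a computation and the formulas are too long.
set_option linter.style.whitespace false in
lemma formula2 :
    S.Y ^ 3 + S.u₄ * S.Z ^ 3 = S.u₅ * ((hζ.toInteger - 1) ^ (S.multiplicity - 1) * S.X) ^ 3 := by
  rw [u₅_def, neg_mul, neg_mul, Units.val_neg, neg_mul, eq_neg_iff_add_eq_zero, add_assoc,
    add_comm (S.u₄ * S.Z ^ 3), ← add_assoc, add_comm (S.Y ^ 3)]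
  apply mul_right_cancel₀ <| mul_ne_zero
    (mul_ne_zero hζ.zeta_sub_one_prime'.ne_zero S.u₂.isUnit.ne_zero) (Units.isUnit (IsPrimitiveRoot.isUnit (hζ.toInteger_isPrimitiveRoot) (by decide)).unit).ne_zero
  simp only [zero_mul, add_mul]
  rw [← formula1 S]
  congrm ?_ + ?_ + ?_
  · have : (S.multiplicity-1)*3+1 = 3*S.multiplicity-2 := by have := S.two_le_multiplicity; lia
    calc _ = S.X^3 *(S.u₂*S.u₂⁻¹)*((IsPrimitiveRoot.isUnit (hζ.toInteger_isPrimitiveRoot) (by decide)).unit^3*S.u₁)*((hζ.toInteger - 1)^((S.multiplicity-1)*3)*(hζ.toInteger - 1)) := by push_cast; ring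
    _ = S.X^3*S.u₁*(hζ.toInteger - 1)^(3*S.multiplicity-2) := by simp [hζ.toInteger_cube_eq_one, ← pow_succ, this]
  · ring
  · simp only [u₄_def, inv_eq_one_div, mul_div_assoc', mul_one, val_div_eq_divp, Units.val_mul,
      IsUnit.unit_spec, divp_mul_eq_mul_divp, divp_eq_iff_mul_eq]
    ring

-- This is just a computation and the formulas are too long.
set_option linter.style.whitespace false in
lemma lambda_sq_div_u₅_mul : (hζ.toInteger - 1) ^ 2 ∣ S.u₅ * ((hζ.toInteger - 1) ^ (S.multiplicity - 1) * S.X) ^ 3 := by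
  use (hζ.toInteger - 1)^(3*S.multiplicity-5)*S.u₅*(S.X^3)
  have : 3*(S.multiplicity-1) = 2+(3*S.multiplicity-5) := by have := S.two_le_multiplicity; lia
  calc _ = (hζ.toInteger - 1)^(3*(S.multiplicity-1))*S.u₅*S.X^3 := by ring
  _ = (hζ.toInteger - 1)^2*(hζ.toInteger - 1)^(3*S.multiplicity-5)*S.u₅*S.X^3 := by rw [this, pow_add]
  _ = (hζ.toInteger - 1)^2*((hζ.toInteger - 1)^(3*S.multiplicity-5)*S.u₅*S.X^3) := by ring

lemma u₄_eq_one_or_neg_one : S.u₄ = 1 ∨ S.u₄ = -1 := by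
  have : (hζ.toInteger - 1) ^ 2 ∣ (hζ.toInteger - 1) ^ 4 := ⟨(hζ.toInteger - 1) ^ 2, by ring⟩
  have h := S.lambda_sq_div_u₅_mul
  apply IsCyclotomicExtension.Rat.Three.eq_one_or_neg_one_of_unit_of_congruent hζ
  rcases h with ⟨X, hX⟩
  rcases lambda_pow_four_dvd_cube_sub_one_or_add_one_of_lambda_not_dvd hζ S.lambda_not_dvd_Y with
    HY | HY <;> rcases lambda_pow_four_dvd_cube_sub_one_or_add_one_of_lambda_not_dvd
      hζ S.lambda_not_dvd_Z with HZ | HZ <;> replace HY := this.trans HY <;> replace HZ :=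
      this.trans HZ <;> rcases HY with ⟨Y, hY⟩ <;> rcases HZ with ⟨Z, hZ⟩
  · refine ⟨-1, X - Y - S.u₄ * Z, ?_⟩
    rw [show (hζ.toInteger - 1) ^ 2 * (X - Y - S.u₄ * Z) = (hζ.toInteger - 1) ^ 2 * X - (hζ.toInteger - 1) ^ 2 * Y - S.u₄ * ((hζ.toInteger - 1) ^ 2 * Z) by ring,
      ← hX, ← hY, ← hZ, ← formula2]
    ring
  · refine ⟨1, -X + Y + S.u₄ * Z, ?_⟩
    rw [show (hζ.toInteger - 1) ^ 2 * (-X + Y + S.u₄ * Z) = -((hζ.toInteger - 1) ^ 2 * X - (hζ.toInteger - 1) ^ 2 * Y - S.u₄ * ((hζ.toInteger - 1) ^ 2 * Z)) by ring,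
      ← hX, ← hY, ← hZ, ← formula2]
    ring
  · refine ⟨1, X - Y - S.u₄ * Z, ?_⟩
    rw [show (hζ.toInteger - 1) ^ 2 * (X - Y - S.u₄ * Z) = (hζ.toInteger - 1) ^ 2 * X - (hζ.toInteger - 1) ^ 2 * Y - S.u₄ * ((hζ.toInteger - 1) ^ 2 * Z) by ring,
      ← hX, ← hY, ← hZ, ← formula2]
    ring
  · refine ⟨-1, -X + Y + S.u₄ * Z, ?_⟩
    rw [show (hζ.toInteger - 1) ^ 2 * (-X + Y + S.u₄ * Z) = -((hζ.toInteger - 1) ^ 2 * X - (hζ.toInteger - 1) ^ 2 * Y - S.u₄ * ((hζ.toInteger - 1) ^ 2 * Z)) by ring,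
      ← hX, ← hY, ← hZ, ← formula2]
    ring

lemma u₄_sq : S.u₄ ^ 2 = 1 := by
  rcases S.u₄_eq_one_or_neg_one with h | h <;> simp [h]

/-- Given `S : Solution`, we have that
`S.Y ^ 3 + (S.u₄ * S.Z) ^ 3 = S.u₅ * ((hζ.toInteger - 1) ^ (S.multiplicity - 1) * S.X) ^ 3`. -/
lemma formula3 :
    S.Y ^ 3 + (S.u₄ * S.Z) ^ 3 = S.u₅ * ((hζ.toInteger - 1) ^ (S.multiplicity - 1) * S.X) ^ 3 :=
  calc S.Y ^ 3 + (S.u₄ * S.Z) ^ 3 = S.Y ^ 3 + S.u₄ ^ 2 * S.u₄ * S.Z ^ 3 := by ring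
  _ = S.Y ^ 3 + S.u₄ * S.Z ^ 3 := by simp [← Units.val_pow_eq_pow_val, S.u₄_sq]
  _ = S.u₅ * ((hζ.toInteger - 1) ^ (S.multiplicity - 1) * S.X) ^ 3 := S.formula2

/-- Given `S : Solution`, we construct `S₁ : Solution'`, with smaller multiplicity of `(hζ.toInteger - 1)` in
  `c` (see `Solution'_descent_multiplicity_lt` below.). -/
noncomputable def Solution'_descent : Solution' hζ where
  a := S.Y
  b := S.u₄ * S.Z
  c := (hζ.toInteger - 1) ^ (S.multiplicity - 1) * S.X
  u := S.u₅
  ha := S.lambda_not_dvd_Y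
  hb := fun h ↦ S.lambda_not_dvd_Z <| Units.dvd_mul_left.1 h
  hc := fun h ↦ S.X_ne_zero <| by simpa [hζ.zeta_sub_one_prime'.ne_zero] using h
  coprime := (isCoprime_mul_unit_left_right S.u₄.isUnit _ _).2 S.isCoprime_Y_Z
  hcdvd := by
    refine dvd_mul_of_dvd_left (dvd_pow_self _ (fun h ↦ ?_)) _
    rw [Nat.sub_eq_iff_eq_add (le_trans (by simp) S.two_le_multiplicity), zero_add] at h
    simpa [h] using S.two_le_multiplicity
  H := formula3 S

/-- We have that `S.Solution'_descent.multiplicity = S.multiplicity - 1`. -/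
lemma Solution'_descent_multiplicity : S.Solution'_descent.multiplicity = S.multiplicity - 1 := by
  refine multiplicity_eq_of_dvd_of_not_dvd
    (by simp [Solution'_descent]) (fun h ↦ S.lambda_not_dvd_X ?_)
  obtain ⟨k, hk : (hζ.toInteger - 1) ^ (S.multiplicity - 1) * S.X = (hζ.toInteger - 1) ^ (S.multiplicity - 1 + 1) * k⟩ := h
  rw [pow_succ, mul_assoc] at hk
  simp only [mul_eq_mul_left_iff, pow_eq_zero_iff', hζ.zeta_sub_one_prime'.ne_zero, ne_eq,
    false_and, or_false] at hk
  simp [hk]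

/-- We have that `S.Solution'_descent.multiplicity < S.multiplicity`. -/
lemma Solution'_descent_multiplicity_lt :
    (Solution'_descent S).multiplicity < S.multiplicity := by
  rw [Solution'_descent_multiplicity S, Nat.sub_one]
  exact Nat.pred_lt <| by have := S.two_le_multiplicity; lia

/-- Given any `S : Solution`, there is another `S₁ : Solution` such that
  `S₁.multiplicity < S.multiplicity` -/
theorem exists_Solution_multiplicity_lt :
    ∃ S₁ : Solution hζ, S₁.multiplicity < S.multiplicity := by
  obtain ⟨S', hS'⟩ := exists_Solution_of_Solution' (Solution'_descent S)
  exact ⟨S', hS' ▸ Solution'_descent_multiplicity_lt S⟩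

end Solution

end FermatLastTheoremForThreeGen

end eisenstein


private lemma flt3_integers :
    FermatLastTheoremWith (𝓞 (CyclotomicField 3 ℚ)) 3 := by
  classical
  set K := CyclotomicField 3 ℚ with hK
  haveI : IsCyclotomicExtension {3} ℚ K := by
    convert CyclotomicField.isCyclotomicExtension 3 ℚ
    · rfl
    · exact Subsingleton.elim _ _
  haveI : NumberField K := IsCyclotomicExtension.numberField {3} ℚ _
  haveI : IsPrincipalIdealRing (𝓞 K) := IsCyclotomicExtension.Rat.three_pid K
  letI := UniqueFactorizationMonoid.normalizationMonoid (α := 𝓞 K)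
  letI := UniqueFactorizationMonoid.toNormalizedGCDMonoid (𝓞 K)
  set hζ := IsCyclotomicExtension.zeta_spec 3 ℚ K with hζdef
  have hprime : Prime (hζ.toInteger - 1) := hζ.zeta_sub_one_prime'
  have hθ3 : hζ.toInteger ^ 3 = 1 := hζ.toInteger_cube_eq_one
  have hlam4_not_dvd : ∀ x : 𝓞 K, x = 1 ∨ x = -1 ∨ x = 3 ∨ x = -3 →
      ¬ (hζ.toInteger - 1) ^ 4 ∣ x := aux_not_dvd hprime rfl hθ3
  -- the descent theorem
  have Gen : FermatLastTheoremForThreeGen hζ := by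
    intro a b c u hc ha hb hcdvd coprime H
    let S' : FermatLastTheoremForThreeGen.Solution' hζ :=
    { a := a, b := b, c := c, u := u, ha := ha, hb := hb, hc := hc,
      coprime := coprime, hcdvd := hcdvd, H := H }
    obtain ⟨S, -⟩ := FermatLastTheoremForThreeGen.exists_Solution_of_Solution' S'
    obtain ⟨Smin, hSmin⟩ := S.exists_minimal
    obtain ⟨Sfin, hSfin⟩ := Smin.exists_Solution_multiplicity_lt
    linarith [hSmin Sfin]
  apply fermatLastTheoremWith_of_fermatLastTheoremWith_coprime
  intro a b c ha hb hc Hgcd H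
  -- pairwise coprimality
  have hdvd_gcd3 : ∀ x : 𝓞 K, x ∣ a → x ∣ b → x ∣ c → IsUnit x := by
    intro x hxa hxb hxc
    have : x ∣ ({a, b, c} : Finset (𝓞 K)).gcd id := by
      refine Finset.dvd_gcd (fun i hi => ?_)
      simp only [Finset.mem_insert, Finset.mem_singleton] at hi
      rcases hi with rfl | rfl | rfl <;> simpa
    rw [Hgcd] at this
    exact isUnit_of_dvd_one this
  have hab : IsCoprime a b := by
    rw [← gcd_isUnit_iff]
    have h3 : gcd a b ^ 3 ∣ c ^ 3 := by
      rw [← H]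
      exact dvd_add (pow_dvd_pow_of_dvd (gcd_dvd_left a b) 3)
        (pow_dvd_pow_of_dvd (gcd_dvd_right a b) 3)
    exact hdvd_gcd3 _ (gcd_dvd_left a b) (gcd_dvd_right a b)
      ((IsIntegrallyClosed.pow_dvd_pow_iff (by norm_num)).1 h3)
  have hcb : IsCoprime c b := by
    rw [← gcd_isUnit_iff]
    have h3 : gcd c b ^ 3 ∣ a ^ 3 := by
      have : a ^ 3 = c ^ 3 - b ^ 3 := by linear_combination H
      rw [this]
      exact dvd_sub (pow_dvd_pow_of_dvd (gcd_dvd_left c b) 3)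
        (pow_dvd_pow_of_dvd (gcd_dvd_right c b) 3)
    exact hdvd_gcd3 _ ((IsIntegrallyClosed.pow_dvd_pow_iff (by norm_num)).1 h3)
      (gcd_dvd_right c b) (gcd_dvd_left c b)
  have hca : IsCoprime c a := by
    rw [← gcd_isUnit_iff]
    have h3 : gcd c a ^ 3 ∣ b ^ 3 := by
      have : b ^ 3 = c ^ 3 - a ^ 3 := by linear_combination H
      rw [this]
      exact dvd_sub (pow_dvd_pow_of_dvd (gcd_dvd_left c a) 3)
        (pow_dvd_pow_of_dvd (gcd_dvd_right c a) 3)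
    exact hdvd_gcd3 _ (gcd_dvd_right c a)
      ((IsIntegrallyClosed.pow_dvd_pow_iff (by norm_num)).1 h3) (gcd_dvd_left c a)
  by_cases hla : (hζ.toInteger - 1) ∣ a
  · -- lam divides a only
    have hlb : ¬ (hζ.toInteger - 1) ∣ b := fun h => hprime.not_isUnit (hab.isUnit_of_dvd' hla h)
    have hlc : ¬ (hζ.toInteger - 1) ∣ c := fun h => hprime.not_isUnit (hca.isUnit_of_dvd' h hla)
    refine Gen c (-b) a 1 ha hlc (fun h => hlb ((dvd_neg).1 h)) hla hcb.neg_right ?_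
    push_cast
    linear_combination -H
  by_cases hlb : (hζ.toInteger - 1) ∣ b
  · have hlc : ¬ (hζ.toInteger - 1) ∣ c := fun h => hprime.not_isUnit (hcb.isUnit_of_dvd' h hlb)
    refine Gen c (-a) b 1 hb hlc (fun h => hla ((dvd_neg).1 h)) hlb hca.neg_right ?_
    push_cast
    linear_combination -H
  by_cases hlc : (hζ.toInteger - 1) ∣ c
  · refine Gen a b c 1 hc hla hlb hlc hab ?_
    push_cast
    linear_combination H
  -- case 1 : lam divides none of them
  have ha4 := IsCyclotomicExtension.Rat.Three.lambda_pow_four_dvd_cube_sub_one_or_add_one_of_lambda_not_dvd hζ hla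
  have hb4 := IsCyclotomicExtension.Rat.Three.lambda_pow_four_dvd_cube_sub_one_or_add_one_of_lambda_not_dvd hζ hlb
  have hc4 := IsCyclotomicExtension.Rat.Three.lambda_pow_four_dvd_cube_sub_one_or_add_one_of_lambda_not_dvd hζ hlc
  rcases ha4 with ha4 | ha4 <;> rcases hb4 with hb4 | hb4 <;> rcases hc4 with hc4 | hc4 <;>
  · refine hlam4_not_dvd _ ?_ ((ha4.add hb4).sub hc4)
    first
    | exact Or.inl (by linear_combination H)
    | exact Or.inr (Or.inl (by linear_combination H))
    | exact Or.inr (Or.inr (Or.inl (by linear_combination H)))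
    | exact Or.inr (Or.inr (Or.inr (by linear_combination H)))

private lemma flt3_closure {ω : ℂ} (hω : ω ^ 3 = 1) (hω1 : ω ≠ 1) :
    ∀ x y z : ℂ, x ∈ Subring.closure ({ω} : Set ℂ) → y ∈ Subring.closure ({ω} : Set ℂ) →
      z ∈ Subring.closure ({ω} : Set ℂ) → x ≠ 0 → y ≠ 0 → z ≠ 0 → x ^ 3 + y ^ 3 ≠ z ^ 3 := by
  classical
  set K := CyclotomicField 3 ℚ with hK
  haveI : IsCyclotomicExtension {3} ℚ K := by
    convert CyclotomicField.isCyclotomicExtension 3 ℚ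
    · rfl
    · exact Subsingleton.elim _ _
  haveI : NumberField K := IsCyclotomicExtension.numberField {3} ℚ _
  set hζ := IsCyclotomicExtension.zeta_spec 3 ℚ K with hζdef
  set ζ : K := IsCyclotomicExtension.zeta 3 ℚ K with hζdef2
  -- an embedding of K into ℂ
  let φ : K →+* ℂ := (IsAlgClosed.lift (R := ℚ) (S := K) (M := ℂ)).toRingHom
  have hφinj : Function.Injective φ := φ.injective
  set ω' : ℂ := φ ζ with hω'def
  have hω'3 : ω' ^ 3 = 1 := by
    rw [hω'def, ← map_pow, ← map_one φ]
    congr 1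
    exact hζ.pow_eq_one
  have hω'1 : ω' ≠ 1 := by
    rw [hω'def, ← map_one φ]
    exact fun h => hζ.ne_one (by norm_num) (hφinj h)
  -- quadratic relations
  have hquad : ∀ u : ℂ, u ^ 3 = 1 → u ≠ 1 → u ^ 2 + u + 1 = 0 := by
    intro u h3 h1
    have h0 : (u - 1) * (u ^ 2 + u + 1) = 0 := by linear_combination h3
    rcases mul_eq_zero.1 h0 with h | h
    · exact absurd (sub_eq_zero.1 h) h1
    · exact h
  have hωq := hquad ω hω hω1
  have hω'q := hquad ω' hω'3 hω'1
  have hcases : ω' = ω ∨ ω' = ω ^ 2 := by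
    have h0 : (ω' - ω) * (ω' - ω ^ 2) = 0 := by
      linear_combination hω'q + (ω - 1 - ω') * hωq
    rcases mul_eq_zero.1 h0 with h | h
    · exact Or.inl (sub_eq_zero.1 h)
    · exact Or.inr (sub_eq_zero.1 h)
  -- the ring map from 𝓞 K to ℂ
  let ψ : 𝓞 K →+* ℂ := φ.comp (algebraMap (𝓞 K) K)
  have hψinj : Function.Injective ψ := hφinj.comp (IsFractionRing.injective (𝓞 K) K)
  have hψθ : ψ hζ.toInteger = ω' := by
    simp only [ψ, RingHom.comp_apply]
    congr 1
  have hrange : Subring.closure ({ω} : Set ℂ) ≤ ψ.range := by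
    rw [Subring.closure_le, Set.singleton_subset_iff]
    rcases hcases with h | h
    · exact ⟨hζ.toInteger, by rw [hψθ, h]⟩
    · refine ⟨hζ.toInteger ^ 2, ?_⟩
      rw [map_pow, hψθ, h]
      linear_combination ω * hω
  intro x y z hx hy hz hx0 hy0 hz0 hxyz
  obtain ⟨x₀, hx₀⟩ := hrange hx
  obtain ⟨y₀, hy₀⟩ := hrange hy
  obtain ⟨z₀, hz₀⟩ := hrange hz
  have heq : x₀ ^ 3 + y₀ ^ 3 = z₀ ^ 3 := by
    apply hψinj
    rw [map_add, map_pow, map_pow, map_pow, hx₀, hy₀, hz₀]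
    exact hxyz
  refine flt3_integers x₀ y₀ z₀ ?_ ?_ ?_ heq
  · exact fun h => hx0 (by rw [← hx₀, h, map_zero])
  · exact fun h => hy0 (by rw [← hy₀, h, map_zero])
  · exact fun h => hz0 (by rw [← hz₀, h, map_zero])

theorem ord_beta_equal (ω : ℂ) (hω : ω ^ 3 = 1) (hω1 : ω ≠ 1)
    (β : Subring.closure ({ω} : Set ℂ)) (hβ : (β : ℂ) = ω - ω ^ 2)
    (A B C : Subring.closure ({ω} : Set ℂ))
    (hsum : A + B + C = 0)
    (hcube : ∃ D : Subring.closure ({ω} : Set ℂ), D ≠ 0 ∧ A * B * C = D ^ 3) :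
    ∀ n : ℕ, (β ^ n ∣ A ↔ β ^ n ∣ B) ∧ (β ^ n ∣ A ↔ β ^ n ∣ C) := by
  obtain ⟨D, hD0, hDcube⟩ := hcube
  have hωmem : ω ∈ Subring.closure ({ω} : Set ℂ) :=
    Subring.subset_closure (Set.mem_singleton ω)
  have hsumℂ : (A : ℂ) + (B : ℂ) + (C : ℂ) = 0 := by
    have := congrArg (fun t : Subring.closure ({ω} : Set ℂ) => (t : ℂ)) hsum
    push_cast at this
    exact this
  have hcubeℂ : (A : ℂ) * (B : ℂ) * (C : ℂ) = (D : ℂ) ^ 3 := by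
    have := congrArg (fun t : Subring.closure ({ω} : Set ℂ) => (t : ℂ)) hDcube
    push_cast at this
    exact this
  have hωq : ω ^ 2 + ω + 1 = 0 := by
    have h0 : (ω - 1) * (ω ^ 2 + ω + 1) = 0 := by linear_combination hω
    rcases mul_eq_zero.1 h0 with h | h
    · exact absurd (sub_eq_zero.1 h) hω1
    · exact h
  have hω0 : ω ≠ 0 := by
    intro h; rw [h] at hω; norm_num at hω
  have hd0 : (D : ℂ) ≠ 0 := fun h => hD0 (by exact_mod_cast h)
  have hβℂ0 : ω - ω ^ 2 ≠ 0 := by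
    intro h
    have h2 : ω * (1 - ω) = 0 := by linear_combination h
    rcases mul_eq_zero.1 h2 with h' | h'
    · exact hω0 h'
    · exact hω1 (by linear_combination -h')
  have hd2 : (D : ℂ) ^ 3 + (A : ℂ) * (B : ℂ) * ((A : ℂ) + (B : ℂ)) = 0 := by
    linear_combination -hcubeℂ + (A : ℂ) * (B : ℂ) * hsumℂ
  have hident : ((B : ℂ) - ω ^ 2 * (A : ℂ)) ^ 3 + (ω * (A : ℂ) - (B : ℂ)) ^ 3
      = ((ω - ω ^ 2) * (D : ℂ)) ^ 3 := by
    linear_combination (-ω^4*(A:ℂ)^3 - ω^4*(A:ℂ)^2*(B:ℂ) - ω^4*(A:ℂ)*(B:ℂ)^2 + ω^3*(A:ℂ)^3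
      + 4*ω^3*(A:ℂ)^2*(B:ℂ) + 4*ω^3*(A:ℂ)*(B:ℂ)^2 - 3*ω^2*(A:ℂ)^2*(B:ℂ)
      - 6*ω^2*(A:ℂ)*(B:ℂ)^2 + 3*ω*(A:ℂ)*(B:ℂ)^2) * hωq
      - (ω - ω^2)^3 * hd2
  have hXmem : (B : ℂ) - ω ^ 2 * (A : ℂ) ∈ Subring.closure ({ω} : Set ℂ) :=
    Subring.sub_mem _ B.2 (Subring.mul_mem _ (Subring.pow_mem _ hωmem 2) A.2)
  have hYmem : ω * (A : ℂ) - (B : ℂ) ∈ Subring.closure ({ω} : Set ℂ) :=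
    Subring.sub_mem _ (Subring.mul_mem _ hωmem A.2) B.2
  have hZmem : (ω - ω ^ 2) * (D : ℂ) ∈ Subring.closure ({ω} : Set ℂ) :=
    Subring.mul_mem _ (Subring.sub_mem _ hωmem (Subring.pow_mem _ hωmem 2)) D.2
  have hZ0 : (ω - ω ^ 2) * (D : ℂ) ≠ 0 := mul_ne_zero hβℂ0 hd0
  have hXY : (B : ℂ) - ω ^ 2 * (A : ℂ) = 0 ∨ ω * (A : ℂ) - (B : ℂ) = 0 := by
    by_contra h
    push_neg at h
    exact flt3_closure hω hω1 _ _ _ hXmem hYmem hZmem h.1 h.2 hZ0 hident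
  have hunit : IsUnit (⟨ω, hωmem⟩ : Subring.closure ({ω} : Set ℂ)) := by
    refine IsUnit.of_mul_eq_one ((⟨ω, hωmem⟩ : Subring.closure ({ω} : Set ℂ)) ^ 2)
      (Subtype.ext ?_)
    push_cast
    linear_combination hω
  rcases hXY with hX0 | hY0
  · have hBA : B = (⟨ω, hωmem⟩ : Subring.closure ({ω} : Set ℂ)) ^ 2 * A := by
      apply Subtype.ext
      push_cast
      linear_combination hX0
    have hCA : C = (⟨ω, hωmem⟩ : Subring.closure ({ω} : Set ℂ)) * A := by
      apply Subtype.ext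
      push_cast
      linear_combination hsumℂ - hX0 - (A : ℂ) * hωq
    intro n
    rw [hBA, hCA]
    exact ⟨((hunit.pow 2).dvd_mul_left).symm, (hunit.dvd_mul_left).symm⟩
  · have hBA : B = (⟨ω, hωmem⟩ : Subring.closure ({ω} : Set ℂ)) * A := by
      apply Subtype.ext
      push_cast
      linear_combination -hY0
    have hCA : C = (⟨ω, hωmem⟩ : Subring.closure ({ω} : Set ℂ)) ^ 2 * A := by
      apply Subtype.ext
      push_cast
      linear_combination hsumℂ + hY0 - (A : ℂ) * hωq
    intro n
    rw [hBA, hCA]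
    exact ⟨(hunit.dvd_mul_left).symm, ((hunit.pow 2).dvd_mul_left).symm⟩
end
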